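/- arXiv:1410.5748 — 13 statements merged into one kernel-verified Lean document; each statement's English description precedes it below -/
import Mathlib

section
/- Let Ψ be the class of continuous, nondecreasing functions ψ:(0,1]→(0,1] with ψ(τ)>τ for all τ∈(0,1), and let Ψ₁ be the class of functions ψ:(0,1]→(0,1] such that for every r∈(0,1) there exists ρ∈(r,1) with: for all τ, 1−r>τ>1−ρ implies ψ(τ)≥1−r. Then Ψ ⊆ Ψ₁. -/
/-- Ψ₁: for every r ∈ (0,1) there is ρ ∈ (r,1) such that 1-r > τ > 1-ρ implies ψ(τ) ≥ 1-r. -/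
def Psi1 (ψ : ℝ → ℝ) : Prop :=
  (∀ τ ∈ Set.Ioc (0:ℝ) 1, ψ τ ∈ Set.Ioc (0:ℝ) 1) ∧
  ∀ r ∈ Set.Ioo (0:ℝ) 1, ∃ ρ ∈ Set.Ioo r 1,
    ∀ τ, 1 - r > τ → τ > 1 - ρ → ψ τ ≥ 1 - r

/-- Ψ: continuous, nondecreasing ψ : (0,1] → (0,1] with ψ(τ) > τ on (0,1). -/
def PsiClass (ψ : ℝ → ℝ) : Prop :=
  (∀ τ ∈ Set.Ioc (0:ℝ) 1, ψ τ ∈ Set.Ioc (0:ℝ) 1) ∧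
  ContinuousOn ψ (Set.Ioc (0:ℝ) 1) ∧
  MonotoneOn ψ (Set.Ioc (0:ℝ) 1) ∧
  ∀ τ ∈ Set.Ioo (0:ℝ) 1, ψ τ > τ

theorem Psi_subset_Psi1 : {ψ : ℝ → ℝ | PsiClass ψ} ⊆ {ψ : ℝ → ℝ | Psi1 ψ} := by
  rintro ψ ⟨hmap, hcont, hmono, hgt⟩
  refine ⟨hmap, ?_⟩
  rintro r ⟨hr0, hr1⟩
  set s : ℝ := 1 - r with hs
  have hs0 : (0:ℝ) < s := by simp [hs]; linarith
  have hs1 : s < 1 := by simp [hs]; linarith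
  have hsmem : s ∈ Set.Ioc (0:ℝ) 1 := ⟨hs0, le_of_lt hs1⟩
  have hψs : ψ s > s := hgt s ⟨hs0, hs1⟩
  -- continuity at s within Ioc 0 1
  have hc : ContinuousWithinAt ψ (Set.Ioc (0:ℝ) 1) s := hcont s hsmem
  have hsub : Set.Ioo (s/2) s ⊆ Set.Ioc (0:ℝ) 1 := fun x hx =>
    ⟨lt_trans (by linarith) hx.1, le_of_lt (lt_trans hx.2 hs1)⟩
  have hc' : ContinuousWithinAt ψ (Set.Ioo (s/2) s) s :=
    hc.mono hsub
  have hev : ∀ᶠ t in nhdsWithin s (Set.Ioo (s/2) s), ψ t > s := by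
    have : ∀ᶠ y in nhdsWithin s (Set.Ioo (s/2) s), ψ y ∈ Set.Ioi s :=
      hc' (Ioi_mem_nhds hψs)
    exact this
  have hne : (nhdsWithin s (Set.Ioo (s/2) s)).NeBot := by
    have : s ∈ closure (Set.Ioo (s/2) s) := by
      rw [closure_Ioo (by linarith : s/2 ≠ s)]
      exact ⟨by linarith, le_refl s⟩
    exact mem_closure_iff_nhdsWithin_neBot.mp this
  obtain ⟨t₀, ht₀, hψt₀⟩ := (hev.and (eventually_mem_nhdsWithin)).exists
  -- ht₀ : ψ t₀ > s, hψt₀ : t₀ ∈ Ioo (s/2) s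
  refine ⟨1 - t₀, ⟨by simp [hs] at hψt₀ ⊢; linarith [hψt₀.2], by linarith [hψt₀.1]⟩, ?_⟩
  intro τ hτ1 hτ2
  have hτ2' : τ > t₀ := by linarith
  have hτmem : τ ∈ Set.Ioc (0:ℝ) 1 := ⟨by linarith [hψt₀.1], by linarith⟩
  have ht₀mem : t₀ ∈ Set.Ioc (0:ℝ) 1 := hsub hψt₀
  have := hmono ht₀mem hτmem (le_of_lt hτ2')
  linarith
end

section
/- The function ψ:(0,1]→(0,1] defined by ψ(τ)=1/2 for τ<1/2, ψ(τ)=(n+1)/(n+2) for n/(n+1)≤τ<(n+1)/(n+2) (n≥1), and ψ(1)=1, belongs to Ψ₁ but is not continuous (hence Ψ is a proper subset of Ψ₁). -/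
open Topology Filter


lemma psi_exists_step (τ : ℝ) (h1 : 1/2 ≤ τ) (h2 : τ < 1) :
    ∃ n : ℕ, 1 ≤ n ∧ (n:ℝ)/(n+1) ≤ τ ∧ τ < ((n:ℝ)+1)/((n:ℝ)+2) := by
  have hτ : 0 < 1 - τ := by linarith
  set x := τ / (1 - τ) with hxdef
  have hx0 : 0 ≤ x := div_nonneg (by linarith) hτ.le
  have hx1 : 1 ≤ x := (le_div_iff₀ hτ).mpr (by linarith)
  refine ⟨⌊x⌋₊, Nat.le_floor (by exact_mod_cast hx1), ?_, ?_⟩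
  · have hf : (⌊x⌋₊ : ℝ) ≤ x := Nat.floor_le hx0
    rw [le_div_iff₀ hτ] at hf
    rw [div_le_iff₀ (by positivity)]
    nlinarith
  · have hf : x < ⌊x⌋₊ + 1 := Nat.lt_floor_add_one x
    rw [hxdef, div_lt_iff₀ hτ] at hf
    rw [lt_div_iff₀ (by positivity)]
    nlinarith

lemma psi_exists_step' (s : ℝ) (h1 : 1/2 < s) (h2 : s < 1) :
    ∃ n : ℕ, 1 ≤ n ∧ (n:ℝ)/(n+1) < s ∧ s ≤ ((n:ℝ)+1)/((n:ℝ)+2) := by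
  have hs : 0 < 1 - s := by linarith
  set x := s / (1 - s) with hxdef
  have hx0 : 0 ≤ x := div_nonneg (by linarith) hs.le
  have hx1 : 1 < x := (lt_div_iff₀ hs).mpr (by linarith)
  have hm2 : 2 ≤ ⌈x⌉₊ := by
    have := Nat.lt_ceil.mpr (show ((1:ℕ):ℝ) < x by exact_mod_cast hx1)
    omega
  have hcast : ((⌈x⌉₊ - 1 : ℕ) : ℝ) = (⌈x⌉₊ : ℝ) - 1 := by
    have : (1:ℕ) ≤ ⌈x⌉₊ := by omega
    push_cast [Nat.cast_sub this]
    ring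
  have hcge : (2:ℝ) ≤ (⌈x⌉₊ : ℝ) := by exact_mod_cast hm2
  have hub : ((⌈x⌉₊ : ℝ) - 1) * (1 - s) < s := by
    have h' : (⌈x⌉₊ : ℝ) - 1 < x := by
      have := Nat.ceil_lt_add_one hx0; linarith
    rw [hxdef] at h'
    exact (lt_div_iff₀ hs).mp h'
  have hlb : s ≤ (⌈x⌉₊ : ℝ) * (1 - s) := by
    have h' : x ≤ (⌈x⌉₊ : ℝ) := Nat.le_ceil x
    rw [hxdef] at h'
    exact (div_le_iff₀ hs).mp h'
  refine ⟨⌈x⌉₊ - 1, by omega, ?_, ?_⟩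
  · rw [hcast, div_lt_iff₀ (by linarith)]
    nlinarith
  · rw [hcast, le_div_iff₀ (by linarith)]
    nlinarith

theorem psi_example_in_Psi1_not_continuous (ψ : ℝ → ℝ)
    (h0 : ∀ τ ∈ Set.Ioc (0:ℝ) 1, τ < 1/2 → ψ τ = 1/2)
    (hn : ∀ n : ℕ, 1 ≤ n → ∀ τ : ℝ,
      (n : ℝ)/(n+1) ≤ τ → τ < ((n : ℝ)+1)/((n : ℝ)+2) → ψ τ = ((n : ℝ)+1)/((n : ℝ)+2))
    (h1 : ψ 1 = 1) :
    Psi1 ψ ∧ ¬ ContinuousOn ψ (Set.Ioc (0:ℝ) 1) := by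
  constructor
  · constructor
    · intro τ hτ
      rcases lt_or_ge τ (1/2) with hlt | hge
      · rw [h0 τ hτ hlt]; norm_num
      · rcases eq_or_lt_of_le hτ.2 with heq | hlt1
        · rw [heq, h1]; norm_num
        · obtain ⟨n, hn1, ha, hb⟩ := psi_exists_step τ hge hlt1
          rw [hn n hn1 τ ha hb]
          constructor
          · positivity
          · rw [div_le_one (by positivity)]; linarith
    · intro r hr
      rcases le_or_gt (1 - r) (1/2) with hle | hgt
      · refine ⟨(r + 1)/2, ⟨by linarith [hr.2], by linarith [hr.2]⟩, ?_⟩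
        intro τ hτ1 hτ2
        have h2 : 1 - (r+1)/2 = (1 - r)/2 := by ring
        rw [h2] at hτ2
        have hτpos : 0 < τ := by linarith [hr.2]
        rw [h0 τ ⟨hτpos, by linarith [hr.1]⟩ (by linarith)]
        linarith
      · obtain ⟨n, hn1, ha, hb⟩ := psi_exists_step' (1 - r) hgt (by linarith [hr.1])
        have hnp : (0:ℝ) < (n:ℝ)/(n+1) := by
          have : (1:ℝ) ≤ (n:ℝ) := by exact_mod_cast hn1
          positivity
        refine ⟨1 - (n:ℝ)/(n+1), ⟨by linarith, by linarith⟩, ?_⟩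
        intro τ hτ1 hτ2
        have hτa : (n:ℝ)/(n+1) ≤ τ := by linarith
        have hτb : τ < ((n:ℝ)+1)/((n:ℝ)+2) := by linarith
        rw [hn n hn1 τ hτa hτb]
        linarith
  · intro hc
    have hmem : (1/2 : ℝ) ∈ Set.Ioc (0:ℝ) 1 := by norm_num
    have hψhalf : ψ (1/2) = 2/3 := by
      have := hn 1 le_rfl (1/2) (by norm_num) (by norm_num)
      norm_num at this
      linarith
    have h := (hc (1/2) hmem).tendsto
    rw [hψhalf] at h
    have hle : 𝓝[Set.Ioo (0:ℝ) (1/2)] (1/2) ≤ 𝓝[Set.Ioc (0:ℝ) 1] (1/2) :=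
      nhdsWithin_mono _ (fun x hx => ⟨hx.1, by linarith [hx.2]⟩)
    have h2 : Filter.Tendsto ψ (𝓝[Set.Ioo (0:ℝ) (1/2)] (1/2)) (𝓝 (2/3)) :=
      h.mono_left hle
    have h3 : Filter.Tendsto ψ (𝓝[Set.Ioo (0:ℝ) (1/2)] (1/2)) (𝓝 (1/2)) := by
      refine Filter.Tendsto.congr' ?_ tendsto_const_nhds
      filter_upwards [self_mem_nhdsWithin] with x hx
      exact (h0 x ⟨hx.1, by linarith [hx.2]⟩ hx.2).symm
    rw [nhdsWithin_Ioo_eq_nhdsLT (by norm_num : (0:ℝ) < 1/2)] at h2 h3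
    have := tendsto_nhds_unique h3 h2
    norm_num at this
end

section
/- A nondecreasing function ψ:(0,1]→(0,1] with ψ(τ)>τ for all τ∈(0,1) and lim_{n→∞}ψⁿ(τ)=1 for all τ∈(0,1) belongs to Ψ₁. -/
theorem monotone_iter_tendsto_one_mem_Psi1 (ψ : ℝ → ℝ)
    (hmap : ∀ τ ∈ Set.Ioc (0:ℝ) 1, ψ τ ∈ Set.Ioc (0:ℝ) 1)
    (hmono : MonotoneOn ψ (Set.Ioc (0:ℝ) 1))
    (hgt : ∀ τ ∈ Set.Ioo (0:ℝ) 1, ψ τ > τ)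
    (hiter : ∀ τ ∈ Set.Ioo (0:ℝ) 1,
      Filter.Tendsto (fun n : ℕ => ψ^[n] τ) Filter.atTop (nhds 1)) :
    Psi1 ψ := by
  refine ⟨hmap, ?_⟩
  intro r hr
  set t := 1 - r with ht
  have ht0 : 0 < t := by simp only [ht]; linarith [hr.2]
  have ht1 : t < 1 := by simp only [ht]; linarith [hr.1]
  by_contra hcon
  push_neg at hcon
  have key : ∀ s ∈ Set.Ioo (0:ℝ) t, ψ s < t := by
    intro s hs
    obtain ⟨τ, hτ1, hτ2, hτ3⟩ := hcon (1 - s) ⟨by linarith [hs.2], by linarith [hs.1]⟩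
    have hsτ : s ≤ τ := by linarith
    have hsI : s ∈ Set.Ioc (0:ℝ) 1 := ⟨hs.1, by linarith⟩
    have hτI : τ ∈ Set.Ioc (0:ℝ) 1 := ⟨by linarith [hs.1], by linarith⟩
    calc ψ s ≤ ψ τ := hmono hsI hτI hsτ
    _ < t := hτ3
  have hx : ∀ n : ℕ, ψ^[n] (t/2) ∈ Set.Ioo (0:ℝ) t := by
    intro n
    induction n with
    | zero =>
      simp only [Function.iterate_zero_apply]
      exact ⟨by linarith, by linarith⟩
    | succ n ih =>
      rw [Function.iterate_succ_apply']
      have hI : ψ^[n] (t/2) ∈ Set.Ioc (0:ℝ) 1 := ⟨ih.1, by linarith [ih.2]⟩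
      exact ⟨(hmap _ hI).1, key _ ih⟩
  have hlim := hiter (t/2) ⟨by linarith, by linarith⟩
  have : (1:ℝ) ≤ t :=
    le_of_tendsto hlim (Filter.Eventually.of_forall fun n => (hx n).2.le)
  linarith
end

section
/- Let E,F be nonnegative functions on a nonempty set X with E(x)≤F(x) for all x. Then the following are equivalent: (i) there exists φ∈Φ₁ with E(x)≤φ(F(x)) for all x∈X; (ii) for every ε>0 there is δ>ε such that ε<F(x)<δ implies E(x)≤ε. -/
/-- Φ₁: nonnegativity-preserving φ on [0,∞) such that for every ε>0 there is δ>ε with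
ε<s<δ ⟹ φ(s) ≤ ε. -/
def Phi1 (φ : ℝ → ℝ) : Prop :=
  (∀ s : ℝ, 0 ≤ s → 0 ≤ φ s) ∧
  ∀ ε : ℝ, 0 < ε → ∃ δ : ℝ, δ > ε ∧ ∀ s : ℝ, ε < s → s < δ → φ s ≤ ε

theorem phi_contractive_characterization {X : Type*} [Nonempty X]
    (E F : X → ℝ) (hE : ∀ x, 0 ≤ E x) (hF : ∀ x, 0 ≤ F x)
    (hEF : ∀ x, E x ≤ F x) :
    (∃ φ : ℝ → ℝ, Phi1 φ ∧ ∀ x, E x ≤ φ (F x)) ↔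
      (∀ ε : ℝ, 0 < ε → ∃ δ : ℝ, δ > ε ∧ ∀ x, ε < F x → F x < δ → E x ≤ ε) := by
  constructor
  · rintro ⟨φ, ⟨hnn, hφ⟩, hle⟩ ε hε
    obtain ⟨δ, hδ, h⟩ := hφ ε hε
    exact ⟨δ, hδ, fun x h1 h2 => (hle x).trans (h _ h1 h2)⟩
  · intro H
    set S : ℝ → Set ℝ := fun s => insert 0 {e : ℝ | ∃ x, F x = s ∧ E x = e} with hS
    have hbdd : ∀ s, BddAbove (S s) := by
      intro s
      refine ⟨max 0 s, ?_⟩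
      rintro e (rfl | ⟨x, rfl, rfl⟩)
      · exact le_max_left _ _
      · exact (hEF x).trans (le_max_right _ _)
    refine ⟨fun s => sSup (S s), ⟨?_, ?_⟩, ?_⟩
    · intro s _
      exact le_csSup (hbdd s) (Or.inl rfl)
    · intro ε hε
      obtain ⟨δ, hδ, h⟩ := H ε hε
      refine ⟨δ, hδ, fun s h1 h2 => ?_⟩
      refine csSup_le ⟨0, Or.inl rfl⟩ ?_
      rintro e (rfl | ⟨x, hx, rfl⟩)
      · exact hε.le
      · exact h x (hx ▸ h1) (hx ▸ h2)
    · intro x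
      exact le_csSup (hbdd _) (Or.inr ⟨x, rfl, rfl⟩)
end

section
/- Let E,F be nonnegative functions on a nonempty set X with values in (0,1] and E(x)≥F(x) for all x∈X. Then the following are equivalent: (i) there exists ψ∈Ψ₁ with E(x)≥ψ(F(x)) for all x∈X; (ii) for every r∈(0,1) there exists ρ∈(r,1) such that 1−r>F(x)>1−ρ implies E(x)≥1−r. -/
theorem psi_contractive_characterization {X : Type*} [Nonempty X]
    (E F : X → ℝ)
    (hE : ∀ x, E x ∈ Set.Ioc (0:ℝ) 1) (hF : ∀ x, F x ∈ Set.Ioc (0:ℝ) 1)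
    (hEF : ∀ x, F x ≤ E x) :
    (∃ ψ : ℝ → ℝ, Psi1 ψ ∧ ∀ x, E x ≥ ψ (F x)) ↔
      (∀ r ∈ Set.Ioo (0:ℝ) 1, ∃ ρ ∈ Set.Ioo r 1,
        ∀ x, 1 - r > F x → F x > 1 - ρ → E x ≥ 1 - r) := by
  constructor
  · rintro ⟨ψ, ⟨_, hψ2⟩, hψE⟩ r hr
    obtain ⟨ρ, hρ, h⟩ := hψ2 r hr
    exact ⟨ρ, hρ, fun x h1 h2 => le_trans (h (F x) h1 h2) (hψE x)⟩
  · intro hcond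
    classical
    set ψ : ℝ → ℝ := fun τ =>
      if h : ∃ x, F x = τ then sInf (E '' {x | F x = τ}) else 1 with hψ
    have hne : ∀ τ (h : ∃ x, F x = τ), (E '' {x | F x = τ}).Nonempty := by
      rintro τ ⟨x, hx⟩; exact ⟨E x, x, hx, rfl⟩
    have hbdd : ∀ τ, BddBelow (E '' {x | F x = τ}) := by
      intro τ
      refine ⟨0, ?_⟩
      rintro y ⟨x, _, rfl⟩
      exact le_of_lt (hE x).1
    have hψle : ∀ x, ψ (F x) ≤ E x := by
      intro x
      rw [hψ]
      simp only
      rw [dif_pos ⟨x, rfl⟩]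
      exact csInf_le (hbdd _) ⟨x, rfl, rfl⟩
    have hψlow : ∀ τ, (∃ x, F x = τ) → τ ≤ ψ τ := by
      rintro τ h
      rw [hψ]; simp only; rw [dif_pos h]
      apply le_csInf (hne τ h)
      rintro y ⟨x, hx, rfl⟩
      calc τ = F x := hx.symm
        _ ≤ E x := hEF x
    refine ⟨ψ, ⟨?_, ?_⟩, fun x => hψle x⟩
    · intro τ hτ
      by_cases h : ∃ x, F x = τ
      · constructor
        · exact lt_of_lt_of_le hτ.1 (hψlow τ h)
        · rw [hψ]; simp only; rw [dif_pos h]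
          obtain ⟨x, hx⟩ := h
          exact le_trans (csInf_le (hbdd _) ⟨x, hx, rfl⟩) (hE x).2
      · rw [hψ]; simp only; rw [dif_neg h]
        exact ⟨one_pos, le_refl 1⟩
    · intro r hr
      obtain ⟨ρ, hρ, hcr⟩ := hcond r hr
      refine ⟨ρ, hρ, fun τ h1 h2 => ?_⟩
      by_cases h : ∃ x, F x = τ
      · rw [hψ]; simp only; rw [dif_pos h]
        apply le_csInf (hne τ h)
        rintro y ⟨x, hx, rfl⟩
        exact hcr x (hx ▸ h1) (hx ▸ h2)
      · rw [hψ]; simp only; rw [dif_neg h]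
        linarith [hr.1]
end

section
/- Let T be a self-map of a fuzzy metric space (X,M,*) with M(Tx,Ty,t)≥M(x,y,t) for all x,y,t. If there exists ψ∈Ψ₁ such that M(Tx,Ty,t)≥ψ(M(x,y,t)) for all x,y∈X and t>0, then for every r∈(0,1) there exists ρ∈(r,1) such that for all t>0 and x,y∈X, 1−r>M(x,y,t)>1−ρ implies M(Tx,Ty,t)≥1−r; and conversely. -/
open Filter

/-- A continuous t-norm on [0,1]. -/
def IsTNorm (star : ℝ → ℝ → ℝ) : Prop :=
  (∀ a ∈ Set.Icc (0:ℝ) 1, ∀ b ∈ Set.Icc (0:ℝ) 1, star a b ∈ Set.Icc (0:ℝ) 1) ∧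
  (∀ a b, star a b = star b a) ∧
  (∀ a b c, star (star a b) c = star a (star b c)) ∧
  (∀ a ∈ Set.Icc (0:ℝ) 1, star a 1 = a) ∧
  (∀ a b c d, a ≤ c → b ≤ d → star a b ≤ star c d) ∧
  ContinuousOn (fun p : ℝ × ℝ => star p.1 p.2) (Set.Icc 0 1 ×ˢ Set.Icc 0 1)

/-- A fuzzy metric space in the sense of George and Veeramani (axioms on M). -/
def IsFuzzyMetric {X : Type*} (M : X → X → ℝ → ℝ) (star : ℝ → ℝ → ℝ) : Prop :=
  IsTNorm star ∧
  (∀ x y : X, ∀ t : ℝ, 0 < t → 0 < M x y t ∧ M x y t ≤ 1) ∧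
  (∀ x y : X, (∀ t : ℝ, 0 < t → M x y t = 1) ↔ x = y) ∧
  (∀ x y : X, ∀ t : ℝ, M x y t = M y x t) ∧
  (∀ x y : X, ContinuousOn (M x y) (Set.Ioi (0:ℝ))) ∧
  (∀ x y z : X, ∀ s t : ℝ, 0 < s → 0 < t →
    M x z (s + t) ≥ star (M x y s) (M y z t))

/-- The strong triangle inequality. -/
def IsStrong {X : Type*} (M : X → X → ℝ → ℝ) (star : ℝ → ℝ → ℝ) : Prop :=
  ∀ x y z : X, ∀ t : ℝ, 0 < t → M x z t ≥ star (M x y t) (M y z t)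

/-- M-Cauchy sequence. -/
def MCauchy {X : Type*} (M : X → X → ℝ → ℝ) (x : ℕ → X) : Prop :=
  ∀ r ∈ Set.Ioo (0:ℝ) 1, ∀ t : ℝ, 0 < t →
    ∃ N : ℕ, ∀ m ≥ N, ∀ n ≥ N, M (x n) (x m) t > 1 - r

/-- Convergence of a sequence to a point in a fuzzy metric space. -/
def FuzzyTendsto {X : Type*} (M : X → X → ℝ → ℝ) (x : ℕ → X) (z : X) : Prop :=
  ∀ t : ℝ, 0 < t → Tendsto (fun n => M (x n) z t) atTop (nhds 1)

/-- M-completeness: every M-Cauchy sequence converges. -/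
def MComplete {X : Type*} (M : X → X → ℝ → ℝ) : Prop :=
  ∀ x : ℕ → X, MCauchy M x → ∃ z : X, FuzzyTendsto M x z

/-- Uniform asymptotic regularity of a sequence: for any positive sequence tᵢ ↘ 0,
M(xₙ, xₙ₊₁, tᵢ) → 1 uniformly in i. -/
def UnifAsympRegular {X : Type*} (M : X → X → ℝ → ℝ) (x : ℕ → X) : Prop :=
  ∀ ts : ℕ → ℝ, (∀ i, 0 < ts i) → StrictAnti ts → Tendsto ts atTop (nhds 0) →
    ∀ ε : ℝ, 0 < ε → ∃ N : ℕ, ∀ n ≥ N, ∀ i : ℕ, M (x n) (x (n+1)) (ts i) > 1 - ε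

/-- Asymptotic regularity of a sequence. -/
def AsympRegular {X : Type*} (M : X → X → ℝ → ℝ) (x : ℕ → X) : Prop :=
  ∀ t : ℝ, 0 < t → Tendsto (fun n => M (x n) (x (n+1)) t) atTop (nhds 1)

theorem psi1_contractive_iff_uniform_CM {X : Type*}
    (M : X → X → ℝ → ℝ) (star : ℝ → ℝ → ℝ)
    (hFM : IsFuzzyMetric M star) (T : X → X)
    (hT : ∀ x y : X, ∀ t : ℝ, 0 < t → M (T x) (T y) t ≥ M x y t) :
    (∃ ψ : ℝ → ℝ, Psi1 ψ ∧
        ∀ x y : X, ∀ t : ℝ, 0 < t → M (T x) (T y) t ≥ ψ (M x y t)) ↔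
      (∀ r ∈ Set.Ioo (0:ℝ) 1, ∃ ρ ∈ Set.Ioo r 1,
        ∀ t : ℝ, 0 < t → ∀ x y : X,
          1 - r > M x y t → M x y t > 1 - ρ → M (T x) (T y) t ≥ 1 - r) := by
  constructor
  · rintro ⟨ψ, ⟨hψr, hψ⟩, hc⟩ r hr
    obtain ⟨ρ, hρ, hρspec⟩ := hψ r hr
    exact ⟨ρ, hρ, fun t ht x y h1 h2 => le_trans (hρspec _ h1 h2) (hc x y t ht)⟩
  · intro H
    classical
    set ρ : ℝ → ℝ := fun r => if h : r ∈ Set.Ioo (0:ℝ) 1 then (H r h).choose else 0 with hρdef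
    have hρmem : ∀ r ∈ Set.Ioo (0:ℝ) 1, ρ r ∈ Set.Ioo r 1 := by
      intro r hr; simp only [hρdef, dif_pos hr]; exact (H r hr).choose_spec.1
    have hρspec : ∀ r ∈ Set.Ioo (0:ℝ) 1, ∀ t : ℝ, 0 < t → ∀ x y : X,
        1 - r > M x y t → M x y t > 1 - ρ r → M (T x) (T y) t ≥ 1 - r := by
      intro r hr; simp only [hρdef, dif_pos hr]; exact (H r hr).choose_spec.2
    set A : ℝ → Set ℝ := fun τ =>
      insert τ {s : ℝ | ∃ r ∈ Set.Ioo (0:ℝ) 1, s = 1 - r ∧ 1 - r > τ ∧ τ > 1 - ρ r} with hA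
    have hAne : ∀ τ, (A τ).Nonempty := fun τ => ⟨τ, Set.mem_insert τ _⟩
    have hAbdd : ∀ τ, BddAbove (A τ) := by
      intro τ
      refine ⟨max τ 1, ?_⟩
      rintro s (rfl | ⟨r, hr, rfl, -, -⟩)
      · exact le_max_left _ _
      · exact le_trans (by linarith [hr.1]) (le_max_right τ 1)
    refine ⟨fun τ => sSup (A τ), ⟨?_, ?_⟩, ?_⟩
    · rintro τ ⟨hτ0, hτ1⟩
      constructor
      · exact lt_of_lt_of_le hτ0 (le_csSup (hAbdd τ) (Set.mem_insert τ _))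
      · refine csSup_le (hAne τ) ?_
        rintro s (rfl | ⟨r, hr, rfl, -, -⟩)
        · exact hτ1
        · linarith [hr.1]
    · intro r hr
      refine ⟨ρ r, hρmem r hr, ?_⟩
      intro τ h1 h2
      exact le_csSup (hAbdd τ) (Set.mem_insert_of_mem _ ⟨r, hr, rfl, h1, h2⟩)
    · intro x y t ht
      refine csSup_le (hAne _) ?_
      rintro s (rfl | ⟨r, hr, rfl, h1, h2⟩)
      · exact hT x y t ht
      · exact hρspec r hr t ht x y h1 h2
end

section
/- Let (xₙ) be a sequence in a fuzzy metric space (X,M,*). Suppose that for every t>0 and r∈(0,1), and any two subsequences (x_{pₙ}), (x_{qₙ}), the condition liminf M(x_{pₙ},x_{qₙ},t)≥1−r implies that M(x_{pₙ+1},x_{qₙ+1},t)≥1−r for all sufficiently large n. If (xₙ) is uniformly asymptotically regular, then (xₙ) is M-Cauchy. -/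
open Filter

section Aux

variable {X : Type*} {M : X → X → ℝ → ℝ} {star : ℝ → ℝ → ℝ}

lemma FM.self (hFM : IsFuzzyMetric M star) (a : X) {t : ℝ} (ht : 0 < t) :
    M a a t = 1 :=
  ((hFM.2.2.1 a a).mpr rfl) t ht

lemma FM.pos (hFM : IsFuzzyMetric M star) (a b : X) {t : ℝ} (ht : 0 < t) :
    0 < M a b t := (hFM.2.1 a b t ht).1

lemma FM.le_one (hFM : IsFuzzyMetric M star) (a b : X) {t : ℝ} (ht : 0 < t) :
    M a b t ≤ 1 := (hFM.2.1 a b t ht).2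

lemma FM.star_one_left (hFM : IsFuzzyMetric M star) {a : ℝ} (ha : a ∈ Set.Icc (0:ℝ) 1) :
    star 1 a = a := by
  rw [hFM.1.2.1 1 a]
  exact hFM.1.2.2.2.1 a ha

lemma FM.mono (hFM : IsFuzzyMetric M star) (a b : X) {s t : ℝ} (hs : 0 < s) (hst : s ≤ t) :
    M a b s ≤ M a b t := by
  rcases eq_or_lt_of_le hst with h | h
  · rw [h]
  · have htri := hFM.2.2.2.2.2 a a b (t - s) s (by linarith) hs
    have hself : M a a (t - s) = 1 := FM.self hFM a (by linarith)
    have : star (M a a (t - s)) (M a b s) = M a b s := by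
      rw [hself]
      exact FM.star_one_left hFM ⟨(FM.pos hFM a b hs).le, FM.le_one hFM a b hs⟩
    have harith : t - s + s = t := by ring
    rw [harith, this] at htri
    exact htri

end Aux

theorem cauchy_criterion_unif {X : Type*}
    (M : X → X → ℝ → ℝ) (star : ℝ → ℝ → ℝ)
    (hFM : IsFuzzyMetric M star) (x : ℕ → X)
    (hsub : ∀ t : ℝ, 0 < t → ∀ r ∈ Set.Ioo (0:ℝ) 1,
      ∀ p q : ℕ → ℕ, StrictMono p → StrictMono q →
        liminf (fun n => M (x (p n)) (x (q n)) t) atTop ≥ 1 - r →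
        ∃ N : ℕ, ∀ n ≥ N, M (x (p n + 1)) (x (q n + 1)) t ≥ 1 - r)
    (hreg : UnifAsympRegular M x) :
    MCauchy M x := by
  have hstarmono := hFM.1.2.2.2.2.1
  have hstarcont := hFM.1.2.2.2.2.2
  -- uniform asymptotic regularity at all scales
  have hreg' : ∀ ε : ℝ, 0 < ε → ∃ N : ℕ, ∀ n ≥ N, ∀ s : ℝ, 0 < s →
      1 - ε < M (x n) (x (n+1)) s := by
    intro ε hε
    obtain ⟨N, hN⟩ := hreg (fun i => (1/2 : ℝ) ^ i)
      (fun i => by positivity)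
      (fun i j h => pow_lt_pow_right_of_lt_one₀ (by norm_num) (by norm_num) h)
      (tendsto_pow_atTop_nhds_zero_of_lt_one (by norm_num) (by norm_num))
      ε hε
    refine ⟨N, fun n hn s hs => ?_⟩
    obtain ⟨i, hi⟩ := exists_pow_lt_of_lt_one hs (by norm_num : (1/2 : ℝ) < 1)
    calc 1 - ε < M (x n) (x (n+1)) ((1/2 : ℝ) ^ i) := hN n hn i
      _ ≤ M (x n) (x (n+1)) s := FM.mono hFM _ _ (by positivity) hi.le
  intro r hr t ht
  obtain ⟨hr0, hr1⟩ := hr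
  set ρ : ℝ := r / 2 with hρdef
  have hρ0 : 0 < ρ := by positivity
  have hρ1 : ρ < 1 := by rw [hρdef]; linarith
  -- shift lemma
  have hSL : ∃ δ : ℝ, 0 < δ ∧ ∃ N1 : ℕ, ∀ a b : ℕ, N1 ≤ a → N1 ≤ b →
      1 - ρ - δ ≤ M (x a) (x b) t → 1 - ρ ≤ M (x (a+1)) (x (b+1)) t := by
    by_contra hcon
    push_neg at hcon
    have h' : ∀ k : ℕ, ∃ a b : ℕ, k ≤ a ∧ k ≤ b ∧
        1 - ρ - 1/(k+1) ≤ M (x a) (x b) t ∧ M (x (a+1)) (x (b+1)) t < 1 - ρ := by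
      intro k
      obtain ⟨a, b, ha, hb, hin, hout⟩ := hcon (1/(k+1)) (by positivity) k
      exact ⟨a, b, ha, hb, hin, hout⟩
    choose A B hA hB hin hout using h'
    set φ : ℕ → ℕ := fun k => Nat.rec 0 (fun _ prev => max (A prev) (B prev) + 1) k with hφdef
    have hφsucc : ∀ k, φ (k+1) = max (A (φ k)) (B (φ k)) + 1 := fun k => rfl
    have hφmono : StrictMono φ := by
      apply strictMono_nat_of_lt_succ
      intro k
      calc φ k ≤ A (φ k) := hA (φ k)
        _ ≤ max (A (φ k)) (B (φ k)) := le_max_left _ _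
        _ < φ (k+1) := by rw [hφsucc]; omega
    set p : ℕ → ℕ := fun n => A (φ n) with hpdef
    set q : ℕ → ℕ := fun n => B (φ n) with hqdef
    have hp : StrictMono p := by
      apply strictMono_nat_of_lt_succ
      intro k
      have h1 : A (φ k) ≤ max (A (φ k)) (B (φ k)) := le_max_left _ _
      have h2 : φ (k+1) ≤ A (φ (k+1)) := hA _
      have := hφsucc k
      simp only [hpdef]
      omega
    have hq : StrictMono q := by
      apply strictMono_nat_of_lt_succ
      intro k
      have h1 : B (φ k) ≤ max (A (φ k)) (B (φ k)) := le_max_right _ _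
      have h2 : φ (k+1) ≤ B (φ (k+1)) := hB _
      have := hφsucc k
      simp only [hqdef]
      omega
    -- liminf bound
    have hvu : ∀ n : ℕ, 1 - ρ - 1/(n+1) ≤ M (x (p n)) (x (q n)) t := by
      intro n
      have h1 := hin (φ n)
      have h2 : (n : ℝ) ≤ (φ n : ℝ) := by exact_mod_cast hφmono.le_apply
      have h3 : 1/((φ n : ℝ)+1) ≤ 1/((n : ℝ)+1) := by
        apply one_div_le_one_div_of_le (by positivity)
        linarith
      calc 1 - ρ - 1/((n : ℝ)+1) ≤ 1 - ρ - 1/((φ n : ℝ)+1) := by linarith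
        _ ≤ M (x (p n)) (x (q n)) t := h1
    have hvtend : Tendsto (fun n : ℕ => 1 - ρ - 1/(n+1)) atTop (nhds (1 - ρ)) := by
      have : Tendsto (fun n : ℕ => 1 / ((n : ℝ) + 1)) atTop (nhds 0) := tendsto_one_div_add_atTop_nhds_zero_nat
      have h2 : Tendsto (fun n : ℕ => (1 - ρ) - 1/(n+1)) atTop (nhds ((1 - ρ) - 0)) :=
        tendsto_const_nhds.sub this
      simpa using h2
    have hlim : liminf (fun n => M (x (p n)) (x (q n)) t) atTop ≥ 1 - ρ := by
      have hbdd : IsBoundedUnder (· ≥ ·) atTop (fun n : ℕ => 1 - ρ - 1/(n+1)) :=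
        hvtend.isBoundedUnder_ge
      have hcob : IsCoboundedUnder (· ≥ ·) atTop (fun n => M (x (p n)) (x (q n)) t) := by
        apply Filter.IsBounded.isCobounded_ge (f := Filter.map _ atTop)
        exact ⟨1, Filter.eventually_map.2 (Filter.Eventually.of_forall
          (fun n => FM.le_one hFM _ _ ht))⟩
      calc (1 : ℝ) - ρ = liminf (fun n : ℕ => 1 - ρ - 1/(n+1)) atTop := hvtend.liminf_eq.symm
        _ ≤ liminf (fun n => M (x (p n)) (x (q n)) t) atTop :=
          Filter.liminf_le_liminf (Filter.Eventually.of_forall hvu) hbdd hcob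
    obtain ⟨Nh, hNh⟩ := hsub t ht ρ ⟨hρ0, hρ1⟩ p q hp hq hlim
    exact absurd (hNh Nh le_rfl) (not_le.mpr (hout (φ Nh)))
  obtain ⟨δ0, hδ0pos, N1, hSL'⟩ := hSL
  set δ1 : ℝ := min δ0 (r/4) with hδ1def
  have hδ1pos : 0 < δ1 := lt_min hδ0pos (by positivity)
  have hδ1le : δ1 ≤ r/4 := min_le_right _ _
  have hSL1 : ∀ a b : ℕ, N1 ≤ a → N1 ≤ b →
      1 - ρ - δ1 ≤ M (x a) (x b) t → 1 - ρ ≤ M (x (a+1)) (x (b+1)) t := by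
    intro a b ha hb hin
    apply hSL' a b ha hb
    have : δ1 ≤ δ0 := min_le_left _ _
    linarith
  -- choose δ2 with star (1-δ2) (1-ρ) > 1-ρ-δ1 and δ2 ≤ δ1
  have hρIcc : (1 - ρ) ∈ Set.Icc (0:ℝ) 1 := ⟨by linarith, by linarith⟩
  have hkey : ∃ k : ℕ, 1 - ρ - δ1 < star (1 - 1/(k+1)) (1 - ρ) := by
    by_contra hcon
    push_neg at hcon
    have hpath : Tendsto (fun k : ℕ => ((1 - 1/(k+1) : ℝ), (1 - ρ : ℝ))) atTop
        (nhdsWithin ((1 : ℝ), (1 - ρ : ℝ)) (Set.Icc 0 1 ×ˢ Set.Icc 0 1)) := by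
      apply tendsto_nhdsWithin_of_tendsto_nhds_of_eventually_within
      · have h1 : Tendsto (fun k : ℕ => (1 - 1/(k+1) : ℝ)) atTop (nhds 1) := by
          have h2 : Tendsto (fun k : ℕ => (1 : ℝ) - 1/(k+1)) atTop (nhds (1 - 0)) :=
            tendsto_const_nhds.sub tendsto_one_div_add_atTop_nhds_zero_nat
          simpa using h2
        exact h1.prodMk_nhds tendsto_const_nhds
      · apply Filter.Eventually.of_forall
        intro k
        constructor
        · constructor
          · have h1 : 1/((k:ℝ)+1) ≤ 1 := by
              apply div_le_one_of_le₀ <;> [linarith [Nat.cast_nonneg (α := ℝ) k]; positivity]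
            linarith
          · have h1 : 0 < 1/((k:ℝ)+1) := by positivity
            linarith
        · exact hρIcc
    have hcw : ContinuousWithinAt (fun p : ℝ × ℝ => star p.1 p.2)
        (Set.Icc 0 1 ×ˢ Set.Icc 0 1) ((1 : ℝ), (1 - ρ : ℝ)) :=
      hstarcont.continuousWithinAt ⟨⟨le_refl 0 |>.trans zero_le_one, le_rfl⟩, hρIcc⟩
    have htend : Tendsto (fun k : ℕ => star (1 - 1/(k+1)) (1 - ρ)) atTop
        (nhds (star 1 (1 - ρ))) := hcw.tendsto.comp hpath
    have hone : star 1 (1 - ρ) = 1 - ρ := FM.star_one_left hFM hρIcc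
    rw [hone] at htend
    have : 1 - ρ ≤ 1 - ρ - δ1 := le_of_tendsto htend (Filter.Eventually.of_forall hcon)
    linarith
  obtain ⟨k0, hk0⟩ := hkey
  set δ2 : ℝ := min (1/(k0+1)) δ1 with hδ2def
  have hδ2pos : 0 < δ2 := lt_min (by positivity) hδ1pos
  have hδ2le : δ2 ≤ δ1 := min_le_right _ _
  have hδ2le1 : δ2 ≤ 1 := by
    have : δ2 ≤ 1/((k0:ℝ)+1) := min_le_left _ _
    have h1 : 1/((k0:ℝ)+1) ≤ 1 := by
      apply div_le_one_of_le₀ <;> [linarith [Nat.cast_nonneg (α := ℝ) k0]; positivity]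
    linarith
  have hstarδ2 : 1 - ρ - δ1 < star (1 - δ2) (1 - ρ) := by
    have h1 : (1 - 1/(k0+1) : ℝ) ≤ 1 - δ2 := by
      have : δ2 ≤ 1/((k0:ℝ)+1) := min_le_left _ _
      linarith
    calc 1 - ρ - δ1 < star (1 - 1/(k0+1)) (1 - ρ) := hk0
      _ ≤ star (1 - δ2) (1 - ρ) := hstarmono _ _ _ _ h1 le_rfl
  obtain ⟨N2, hN2⟩ := hreg' δ2 hδ2pos
  -- glue lemma
  have hglue : ∀ a c : ℕ, N2 ≤ a →
      star (1 - δ2) (M (x (a+1)) (x c) t) ≤ M (x a) (x c) t := by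
    intro a c ha
    have hseq : ∀ k : ℕ, star (1 - δ2) (M (x (a+1)) (x c) (t - t/(k+2))) ≤ M (x a) (x c) t := by
      intro k
      have hk2 : (1 : ℝ) < (k : ℝ) + 2 := by
        have := Nat.cast_nonneg (α := ℝ) k; linarith
      have hη0 : 0 < t/((k:ℝ)+2) := by positivity
      have hηt : t/((k:ℝ)+2) < t := div_lt_self ht hk2
      have htri := hFM.2.2.2.2.2 (x a) (x (a+1)) (x c) (t/(k+2)) (t - t/(k+2)) hη0 (by linarith)
      have harith : t/((k:ℝ)+2) + (t - t/(k+2)) = t := by ring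
      rw [harith] at htri
      refine le_trans ?_ htri
      apply hstarmono
      · exact (hN2 a ha (t/(k+2)) hη0).le
      · exact le_rfl
    have hMtend : Tendsto (fun k : ℕ => M (x (a+1)) (x c) (t - t/(k+2))) atTop
        (nhds (M (x (a+1)) (x c) t)) := by
      have hcw : ContinuousWithinAt (M (x (a+1)) (x c)) (Set.Ioi (0:ℝ)) t :=
        (hFM.2.2.2.2.1 (x (a+1)) (x c)).continuousWithinAt (Set.mem_Ioi.mpr ht)
      apply hcw.tendsto.comp
      apply tendsto_nhdsWithin_of_tendsto_nhds_of_eventually_within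
      · have h1 : Tendsto (fun k : ℕ => t/((k:ℝ)+2)) atTop (nhds 0) := by
          have h0 : Tendsto (fun k : ℕ => ((k:ℝ)+2)) atTop atTop :=
            tendsto_atTop_add_const_right atTop 2 tendsto_natCast_atTop_atTop
          have h2 := (tendsto_inv_atTop_zero.comp h0).const_mul t
          simp only [mul_zero] at h2
          simpa [Function.comp, div_eq_mul_inv] using h2
        have h2 : Tendsto (fun k : ℕ => t - t/((k:ℝ)+2)) atTop (nhds (t - 0)) :=
          tendsto_const_nhds.sub h1
        simpa using h2
      · apply Filter.Eventually.of_forall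
        intro k
        have hk2 : (1 : ℝ) < (k : ℝ) + 2 := by
          have := Nat.cast_nonneg (α := ℝ) k; linarith
        have : t/((k:ℝ)+2) < t := div_lt_self ht hk2
        exact Set.mem_Ioi.mpr (by linarith)
    have hstarseq : Tendsto (fun k : ℕ => star (1 - δ2) (M (x (a+1)) (x c) (t - t/(k+2)))) atTop
        (nhds (star (1 - δ2) (M (x (a+1)) (x c) t))) := by
      have hδ2Icc : (1 - δ2) ∈ Set.Icc (0:ℝ) 1 := ⟨by linarith, by linarith⟩
      have hMIcc : M (x (a+1)) (x c) t ∈ Set.Icc (0:ℝ) 1 :=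
        ⟨(FM.pos hFM _ _ ht).le, FM.le_one hFM _ _ ht⟩
      have hcw : ContinuousWithinAt (fun p : ℝ × ℝ => star p.1 p.2)
          (Set.Icc 0 1 ×ˢ Set.Icc 0 1) ((1 - δ2 : ℝ), M (x (a+1)) (x c) t) :=
        hstarcont.continuousWithinAt ⟨hδ2Icc, hMIcc⟩
      have hpath2 : Tendsto (fun k : ℕ => ((1 - δ2 : ℝ), M (x (a+1)) (x c) (t - t/(k+2)))) atTop
          (nhdsWithin ((1 - δ2 : ℝ), M (x (a+1)) (x c) t) (Set.Icc 0 1 ×ˢ Set.Icc 0 1)) := by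
        apply tendsto_nhdsWithin_of_tendsto_nhds_of_eventually_within
        · exact tendsto_const_nhds.prodMk_nhds hMtend
        · apply Filter.Eventually.of_forall
          intro k
          have hk2 : (1 : ℝ) < (k : ℝ) + 2 := by
            have := Nat.cast_nonneg (α := ℝ) k; linarith
          have hηt : t/((k:ℝ)+2) < t := div_lt_self ht hk2
          exact ⟨hδ2Icc, ⟨(FM.pos hFM _ _ (by linarith)).le, FM.le_one hFM _ _ (by linarith)⟩⟩
      exact hcw.tendsto.comp hpath2
    exact le_of_tendsto hstarseq (Filter.Eventually.of_forall hseq)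
  -- main induction
  set N : ℕ := max N1 N2 with hNdef
  have main : ∀ j : ℕ, ∀ n : ℕ, N ≤ n → 1 - ρ - δ1 ≤ M (x n) (x (n+j)) t := by
    intro j
    induction j with
    | zero =>
      intro n hn
      have : M (x n) (x (n+0)) t = 1 := by
        simpa using FM.self hFM (x n) ht
      rw [this]
      linarith
    | succ j ih =>
      intro n hn
      have hn1 : N1 ≤ n := le_trans (le_max_left _ _) hn
      have hn2 : N2 ≤ n := le_trans (le_max_right _ _) hn
      have h1 : 1 - ρ ≤ M (x (n+1)) (x (n+j+1)) t :=
        hSL1 n (n+j) hn1 (le_trans hn1 (Nat.le_add_right _ _)) (ih n hn)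
      have h2 := hglue n (n+(j+1)) hn2
      have h3 : star (1 - δ2) (1 - ρ) ≤ star (1 - δ2) (M (x (n+1)) (x (n+(j+1))) t) := by
        apply hstarmono _ _ _ _ le_rfl
        have : n + (j+1) = n + j + 1 := by omega
        rw [this]
        exact h1
      have h4 : 1 - ρ - δ1 ≤ star (1 - δ2) (1 - ρ) := hstarδ2.le
      linarith
  refine ⟨N, fun m hm n hn => ?_⟩
  have hLr : 1 - r < 1 - ρ - δ1 := by
    rw [hρdef]
    have : δ1 ≤ r/4 := hδ1le
    linarith
  rcases le_total n m with h | h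
  · have := main (m - n) n hn
    rw [Nat.add_sub_cancel' h] at this
    linarith
  · have := main (n - m) m hm
    rw [Nat.add_sub_cancel' h] at this
    rw [hFM.2.2.2.1 (x n) (x m) t]
    linarith
end

section
/- Let (X,M,*) be a strong fuzzy metric space and (xₙ) a sequence such that for every t>0 and r∈(0,1), for any two subsequences (x_{pₙ}), (x_{qₙ}), liminf M(x_{pₙ},x_{qₙ},t)≥1−r implies M(x_{pₙ+1},x_{qₙ+1},t)≥1−r for all large n. If M(xₙ,xₙ₊₁,t)→1 for every t>0, then (xₙ) is M-Cauchy. -/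
open Filter

theorem cauchy_criterion_strong {X : Type*}
    (M : X → X → ℝ → ℝ) (star : ℝ → ℝ → ℝ)
    (hFM : IsFuzzyMetric M star) (hstrong : IsStrong M star) (x : ℕ → X)
    (hsub : ∀ t : ℝ, 0 < t → ∀ r ∈ Set.Ioo (0:ℝ) 1,
      ∀ p q : ℕ → ℕ, StrictMono p → StrictMono q →
        liminf (fun n => M (x (p n)) (x (q n)) t) atTop ≥ 1 - r →
        ∃ N : ℕ, ∀ n ≥ N, M (x (p n + 1)) (x (q n + 1)) t ≥ 1 - r)
    (hreg : AsympRegular M x) :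
    MCauchy M x := by
  obtain ⟨⟨hrange, hcomm, hassoc, hid, hmono, hcont⟩, hpos, heqx, hsymm, hMcont, htri⟩ := hFM
  intro r hr t ht
  by_contra hC
  push_neg at hC
  have hr0 : (0:ℝ) < r := hr.1
  have hr1 : r < 1 := hr.2
  set L : ℝ := 1 - r / 2 with hLdef
  have hL0 : 0 < L := by simp only [hLdef]; linarith
  have hL1 : L < 1 := by simp only [hLdef]; linarith
  have hone : ∀ z, M z z t = 1 := fun z => (heqx z z).mpr rfl t ht
  -- bad pairs below L with increasing indices
  have hbad : ∀ N, ∃ a b : ℕ, N ≤ a ∧ a < b ∧ M (x a) (x b) t < L := by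
    intro N
    obtain ⟨m', hm', n', hn', hle⟩ := hC N
    have hnm : n' ≠ m' := by
      intro h
      rw [h, hone] at hle
      linarith
    rcases lt_or_gt_of_ne hnm with h | h
    · exact ⟨n', m', hn', h, by simp only [hLdef]; linarith⟩
    · refine ⟨m', n', hm', h, ?_⟩
      rw [hsymm]
      simp only [hLdef]; linarith
  -- minimal-second-index bad pairs
  have key : ∀ c : ℕ, ∃ a k : ℕ, c ≤ a ∧ a < k ∧ M (x a) (x k) t < L ∧
      ∀ i, a < i → i < k → L ≤ M (x a) (x i) t := by
    intro N
    obtain ⟨a0, b0, hN, hab, hMab⟩ := hbad N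
    have hex : ∃ kk, a0 < kk ∧ M (x a0) (x kk) t < L := ⟨b0, hab, hMab⟩
    refine ⟨a0, Nat.find hex, hN, (Nat.find_spec hex).1, (Nat.find_spec hex).2, ?_⟩
    intro i hai hik
    have hmin := Nat.find_min hex hik
    push_neg at hmin
    exact hmin hai
  choose a k ha hak hakL hminim using key
  -- iterate to get strictly separated pairs
  let c : ℕ → ℕ := fun n => Nat.rec 1 (fun _ p => k p + 1) n
  have hcs : ∀ j, c (j + 1) = k (c j) + 1 := fun j => rfl
  set m : ℕ → ℕ := fun j => a (c j) with hm
  set kk : ℕ → ℕ := fun j => k (c j) with hkk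
  have hc1 : ∀ j, 1 ≤ c j := by
    intro j
    cases j with
    | zero => exact le_refl 1
    | succ j => rw [hcs]; omega
  have hm1 : ∀ j, 1 ≤ m j := fun j => le_trans (hc1 j) (ha (c j))
  have hmk : ∀ j, m j < kk j := fun j => hak (c j)
  have hkm : ∀ j, kk j < m (j + 1) := by
    intro j
    have h1 : c (j + 1) ≤ m (j + 1) := ha (c (j + 1))
    rw [hcs] at h1
    simp only [hm, hkk] at h1 ⊢
    omega
  set p : ℕ → ℕ := fun j => m j - 1 with hp
  set q : ℕ → ℕ := fun j => kk j - 1 with hq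
  have hp1 : ∀ j, p j + 1 = m j := by intro j; have := hm1 j; simp only [hp]; omega
  have hq1 : ∀ j, q j + 1 = kk j := by
    intro j; have h1 := hm1 j; have h2 := hmk j; simp only [hq]; omega
  have hpmono : StrictMono p := by
    apply strictMono_nat_of_lt_succ
    intro j
    have h1 := hm1 j; have h2 := hmk j; have h3 := hkm j
    simp only [hp]; omega
  have hqmono : StrictMono q := by
    apply strictMono_nat_of_lt_succ
    intro j
    have h2 := hmk j; have h3 := hkm j; have h4 := hmk (j + 1)
    simp only [hq]; omega
  -- adjacent terms tend to 1
  set A : ℕ → ℝ := fun j => M (x (p j)) (x (m j)) t with hA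
  have hAtend : Tendsto A atTop (nhds 1) := by
    have h1 : Tendsto p atTop atTop := hpmono.tendsto_atTop
    have h2 := (hreg t ht).comp h1
    have h3 : A = (fun n => M (x n) (x (n + 1)) t) ∘ p := by
      funext j
      simp only [hA, Function.comp_apply, hp1 j]
    rw [h3]
    exact h2
  -- lower bound for predecessor pairs
  have hApred : ∀ j, star (A j) L ≤ M (x (p j)) (x (q j)) t := by
    intro j
    have h2 : L ≤ M (x (m j)) (x (q j)) t := by
      rcases eq_or_lt_of_le (Nat.le_sub_one_of_lt (hmk j)) with h | h
      · rw [show q j = m j from h.symm, hone]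
        exact le_of_lt hL1
      · refine hminim (c j) (q j) h ?_
        have h2 := hmk j
        simp only [hq, hkk, hm] at h2 ⊢
        omega
    calc star (A j) L ≤ star (A j) (M (x (m j)) (x (q j)) t) :=
          hmono _ _ _ _ le_rfl h2
      _ ≤ M (x (p j)) (x (q j)) t := hstrong _ (x (m j)) _ t ht
  -- star (A j) L tends to L
  have hAmem : ∀ j, A j ∈ Set.Icc (0:ℝ) 1 :=
    fun j => ⟨(hpos _ _ t ht).1.le, (hpos _ _ t ht).2⟩
  have hLmem : L ∈ Set.Icc (0:ℝ) 1 := ⟨hL0.le, hL1.le⟩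
  have hstar1L : star 1 L = L := by
    rw [hcomm]
    exact hid L hLmem
  have hstarTend : Tendsto (fun j => star (A j) L) atTop (nhds L) := by
    have hmem : ((1:ℝ), L) ∈ Set.Icc (0:ℝ) 1 ×ˢ Set.Icc (0:ℝ) 1 :=
      ⟨⟨zero_le_one, le_refl 1⟩, hLmem⟩
    have hcwa := (hcont ((1:ℝ), L) hmem).tendsto
    have hg : Tendsto (fun j => (A j, L)) atTop
        (nhdsWithin ((1:ℝ), L) (Set.Icc (0:ℝ) 1 ×ˢ Set.Icc (0:ℝ) 1)) := by
      rw [tendsto_nhdsWithin_iff]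
      constructor
      · exact (hAtend.prodMk_nhds tendsto_const_nhds)
      · exact Eventually.of_forall fun j => ⟨hAmem j, hLmem⟩
    have := hcwa.comp hg
    rw [hstar1L] at this
    exact this
  -- liminf of predecessor pairs is at least L
  have hliminf : liminf (fun j => M (x (p j)) (x (q j)) t) atTop ≥ 1 - r / 2 := by
    rw [ge_iff_le, ← hLdef]
    have hco : IsCoboundedUnder (· ≥ ·) atTop (fun j => M (x (p j)) (x (q j)) t) :=
      IsBoundedUnder.isCoboundedUnder_ge
        (isBoundedUnder_of ⟨1, fun j => (hpos (x (p j)) (x (q j)) t ht).2⟩)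
    have hb : ∀ b, b < L → b ≤ liminf (fun j => M (x (p j)) (x (q j)) t) atTop := by
      intro b hbL
      refine le_liminf_of_le hco ?_
      filter_upwards [hstarTend.eventually_const_le hbL] with j hj
      exact le_trans hj (hApred j)
    exact le_of_forall_lt_imp_le_of_dense hb
  -- apply the subsequence hypothesis
  obtain ⟨J, hJ⟩ := hsub t ht (r / 2) ⟨by linarith, by linarith⟩ p q hpmono hqmono hliminf
  have hfin := hJ J le_rfl
  rw [hp1 J, hq1 J] at hfin
  have := hakL (c J)
  simp only [hLdef] at this
  have h1 : M (x (m J)) (x (kk J)) t < 1 - r / 2 := this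
  linarith [hfin]
end

section
/- Let (xₙ) be a sequence in a fuzzy metric space (X,M,*) and 𝔐 a nonnegative function on X²×(0,∞) such that for any subsequences (x_{pₙ}),(x_{qₙ}) and any t>0, liminf 𝔐(x_{pₙ},x_{qₙ},t) ≥ liminf M(x_{pₙ},x_{qₙ},t). Suppose for every t>0 and r∈(0,1), liminf 𝔐(x_{pₙ},x_{qₙ},t)≥1−r implies M(x_{pₙ+1},x_{qₙ+1},t)≥1−r for large n. Then (xₙ) is M-Cauchy provided it is uniformly asymptotically regular. -/
open Filter

theorem cauchy_criterion_with_gauge {X : Type*}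
    (M : X → X → ℝ → ℝ) (star : ℝ → ℝ → ℝ)
    (hFM : IsFuzzyMetric M star) (x : ℕ → X)
    (𝔐 : X → X → ℝ → ℝ) (h𝔐nonneg : ∀ a b : X, ∀ t : ℝ, 0 < t → 0 ≤ 𝔐 a b t)
    (hliminf : ∀ p q : ℕ → ℕ, StrictMono p → StrictMono q → ∀ t : ℝ, 0 < t →
      liminf (fun n => 𝔐 (x (p n)) (x (q n)) t) atTop ≥
        liminf (fun n => M (x (p n)) (x (q n)) t) atTop)
    (hsub : ∀ t : ℝ, 0 < t → ∀ r ∈ Set.Ioo (0:ℝ) 1,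
      ∀ p q : ℕ → ℕ, StrictMono p → StrictMono q →
        liminf (fun n => 𝔐 (x (p n)) (x (q n)) t) atTop ≥ 1 - r →
        ∃ N : ℕ, ∀ n ≥ N, M (x (p n + 1)) (x (q n + 1)) t ≥ 1 - r)
    (hreg : UnifAsympRegular M x) :
    MCauchy M x := by
  classical
  obtain ⟨hT, hM01, hMeq, hMsymm, hMcont, hMtri⟩ := hFM
  obtain ⟨hTmem, hTcomm, hTassoc, hTid, hTmono, hTcont⟩ := hT
  by_contra hnc
  unfold MCauchy at hnc
  push_neg at hnc
  obtain ⟨r0, hr0, t0, ht0, hbad⟩ := hnc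
  set ε : ℝ := r0 / 2 with hεdef
  have hε0 : 0 < ε := by have := hr0.1; positivity
  have hε1 : ε < 1 := by have := hr0.2; simp only [hεdef]; linarith
  have hεr0 : ε < r0 := by have := hr0.1; simp only [hεdef]; linarith
  have hMxx : ∀ z : X, ∀ t : ℝ, 0 < t → M z z t = 1 :=
    fun z t ht => (hMeq z z).mpr rfl t ht
  -- construction of bad pairs with minimal second index
  have key : ∀ k : ℕ, ∃ a b : ℕ, k ≤ a ∧ a < b ∧ M (x a) (x b) t0 < 1 - ε ∧
      ∀ i, a < i → i < b → 1 - ε ≤ M (x a) (x i) t0 := by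
    intro k
    obtain ⟨m, hm, n, hn, hmn⟩ := hbad k
    have hne : n ≠ m := by
      rintro rfl
      rw [hMxx (x n) t0 ht0] at hmn
      linarith [hr0.1]
    have hab : ∃ a b : ℕ, k ≤ a ∧ a < b ∧ M (x a) (x b) t0 ≤ 1 - r0 := by
      rcases lt_or_gt_of_ne hne with h | h
      · exact ⟨n, m, hn, h, hmn⟩
      · exact ⟨m, n, hm, h, by rwa [hMsymm]⟩
    obtain ⟨a, b0, hka, hab0, hb0⟩ := hab
    have hP : ∃ j, a < j ∧ M (x a) (x j) t0 < 1 - ε := ⟨b0, hab0, by linarith⟩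
    refine ⟨a, Nat.find hP, hka, (Nat.find_spec hP).1, (Nat.find_spec hP).2, ?_⟩
    intro i hai hib
    have hmin := Nat.find_min hP hib
    push_neg at hmin
    exact hmin hai
  choose pf qf hk1 hk2 hk3 hk4 using key
  obtain ⟨g, hg0, hgS⟩ : ∃ g : ℕ → ℕ, g 0 = 1 ∧ ∀ n, g (n+1) = qf (g n) + 1 :=
    ⟨fun n => Nat.rec 1 (fun _ prev => qf prev + 1) n, rfl, fun _ => rfl⟩
  set p : ℕ → ℕ := fun n => pf (g n) with hpdef
  set q : ℕ → ℕ := fun n => qf (g n) with hqdef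
  have hgp : ∀ n, g n ≤ p n := fun n => hk1 (g n)
  have hpq : ∀ n, p n < q n := fun n => hk2 (g n)
  have hqp : ∀ n, q n + 1 ≤ p (n+1) := fun n => by rw [show q n + 1 = g (n+1) from (hgS n).symm]; exact hgp (n+1)
  have hg1 : ∀ n, 1 ≤ g n := by
    intro n
    induction n with
    | zero => omega
    | succ k ih => rw [hgS k]; omega
  have hp1 : ∀ n, 1 ≤ p n := fun n => le_trans (hg1 n) (hgp n)
  have hq1 : ∀ n, 1 ≤ q n := fun n => by have := hpq n; omega
  have hpmono : StrictMono p := strictMono_nat_of_lt_succ fun n => by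
    have := hpq n; have := hqp n; omega
  have hqmono : StrictMono q := strictMono_nat_of_lt_succ fun n => by
    have := hqp n; have := hpq (n+1); omega
  have hbadpair : ∀ n, M (x (p n)) (x (q n)) t0 < 1 - ε := fun n => hk3 (g n)
  have hminimal : ∀ n, ∀ i, p n < i → i < q n → 1 - ε ≤ M (x (p n)) (x i) t0 :=
    fun n => hk4 (g n)
  -- the gauge sequence of times
  set ts : ℕ → ℝ := fun i => t0 / 2 ^ (i+1) with htsdef
  have hts_pos : ∀ i, 0 < ts i := fun i => by simp only [htsdef]; positivity
  have hts_lt : ∀ i, ts i < t0 := fun i => by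
    simp only [htsdef]
    exact div_lt_self ht0 (one_lt_pow₀ one_lt_two (by omega))
  have hts_anti : StrictAnti ts := strictAnti_nat_of_succ_lt fun n => by
    simp only [htsdef]
    apply div_lt_div_of_pos_left ht0 (by positivity)
    exact pow_lt_pow_right₀ one_lt_two (by omega)
  have hts_tendsto : Tendsto ts atTop (nhds 0) := by
    have h2 : Tendsto (fun i : ℕ => ((1:ℝ)/2) ^ (i+1)) atTop (nhds 0) :=
      (tendsto_pow_atTop_nhds_zero_of_lt_one (by norm_num) (by norm_num)).comp
        (tendsto_add_atTop_nat 1)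
    have h3 := h2.const_mul t0
    rw [mul_zero] at h3
    convert h3 using 2 with i
    simp only [htsdef]
    rw [div_pow]
    ring
  have hreg' := hreg ts hts_pos hts_anti hts_tendsto
  -- the second-to-last point is still far at time t0
  have hbase : ∀ n, 1 - ε ≤ M (x (p n)) (x (q n - 1)) t0 := by
    intro n
    rcases eq_or_lt_of_le (by have := hpq n; omega : p n ≤ q n - 1) with h | h
    · rw [← h, hMxx _ _ ht0]; linarith
    · exact hminimal n (q n - 1) h (by have := hpq n; omega)
  -- choose small time shifts using continuity in t
  have hdelta : ∀ n : ℕ, ∃ j : ℕ,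
      1 - ε - 1/(n+1) < M (x (p n)) (x (q n - 1)) (t0 - ts j) := by
    intro n
    have hcw : ContinuousWithinAt (M (x (p n)) (x (q n - 1))) (Set.Ioi 0) t0 :=
      (hMcont _ _).continuousWithinAt (Set.mem_Ioi.mpr ht0)
    have h1' : Tendsto (fun j : ℕ => t0 - ts j) atTop (nhds t0) := by
      simpa using tendsto_const_nhds.sub hts_tendsto
    have h2' : Tendsto (fun j : ℕ => t0 - ts j) atTop (nhdsWithin t0 (Set.Ioi 0)) :=
      tendsto_nhdsWithin_iff.mpr ⟨h1', Eventually.of_forall fun j => by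
        simp only [Set.mem_Ioi]; linarith [hts_lt j]⟩
    have h3' : Tendsto (fun j : ℕ => M (x (p n)) (x (q n - 1)) (t0 - ts j)) atTop
        (nhds (M (x (p n)) (x (q n - 1)) t0)) := hcw.tendsto.comp h2'
    have hlt : 1 - ε - 1/((n:ℝ)+1) < M (x (p n)) (x (q n - 1)) t0 := by
      have h4 : 0 < 1/((n:ℝ)+1) := by positivity
      linarith [hbase n]
    exact (h3'.eventually (eventually_gt_nhds hlt)).exists
  choose idx hidx using hdelta
  set A : ℕ → ℝ := fun n => M (x (p n - 1)) (x (p n)) (ts (idx n)) with hAdef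
  set C : ℕ → ℝ := fun n => M (x (p n)) (x (q n - 1)) (t0 - ts (idx n)) with hCdef
  set B : ℕ → ℝ := fun n => min (C n) (1 - ε) with hBdef
  have htpos : ∀ n, (0:ℝ) < t0 - ts (idx n) := fun n => by linarith [hts_lt (idx n)]
  have htri : ∀ n, star (A n) (C n) ≤ M (x (p n - 1)) (x (q n - 1)) t0 := by
    intro n
    have h5 := hMtri (x (p n - 1)) (x (p n)) (x (q n - 1)) (ts (idx n)) (t0 - ts (idx n))
      (hts_pos _) (htpos n)
    rwa [show ts (idx n) + (t0 - ts (idx n)) = t0 from by ring] at h5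
  -- A n → 1
  have hA : Tendsto A atTop (nhds 1) := by
    rw [Metric.tendsto_atTop]
    intro μ hμ
    obtain ⟨N, hN⟩ := hreg' μ hμ
    refine ⟨N + 1, fun n hn => ?_⟩
    have hnp : n ≤ p n := hpmono.le_apply
    have hpn : N ≤ p n - 1 := by omega
    have hsucc : p n - 1 + 1 = p n := by have := hp1 n; omega
    have h6 := hN (p n - 1) hpn (idx n)
    rw [hsucc] at h6
    have hle : A n ≤ 1 := (hM01 _ _ _ (hts_pos _)).2
    rw [Real.dist_eq, abs_lt]
    constructor <;> simp only [hAdef] at hle ⊢ <;> linarith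
  -- B n → 1 - ε
  have hB : Tendsto B atTop (nhds (1 - ε)) := by
    have hlo : Tendsto (fun n : ℕ => 1 - ε - 1/((n:ℝ)+1)) atTop (nhds (1 - ε)) := by
      have h6 := tendsto_one_div_add_atTop_nhds_zero_nat (𝕜 := ℝ)
      have h7 : Tendsto (fun n : ℕ => (1 - ε) - 1/((n:ℝ)+1)) atTop (nhds ((1 - ε) - 0)) :=
        Tendsto.sub tendsto_const_nhds h6
      rw [sub_zero] at h7
      exact h7
    refine tendsto_of_tendsto_of_tendsto_of_le_of_le hlo tendsto_const_nhds
      (fun n => ?_) (fun n => min_le_right _ _)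
    exact le_min (le_of_lt (hidx n)) (by
      have h8 : 0 < 1/((n:ℝ)+1) := by positivity
      linarith)
  -- star (A n) (B n) → 1 - ε
  have hABmem : ∀ n, (A n, B n) ∈ Set.Icc (0:ℝ) 1 ×ˢ Set.Icc (0:ℝ) 1 := by
    intro n
    have h9 := hM01 (x (p n - 1)) (x (p n)) _ (hts_pos (idx n))
    have h10 := hM01 (x (p n)) (x (q n - 1)) _ (htpos n)
    constructor
    · exact ⟨le_of_lt h9.1, h9.2⟩
    · constructor
      · exact le_min (le_of_lt h10.1) (by linarith)
      · exact le_trans (min_le_right _ _) (by linarith)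
  have hstar : Tendsto (fun n => star (A n) (B n)) atTop (nhds (1 - ε)) := by
    have hmem1 : ((1:ℝ), 1 - ε) ∈ Set.Icc (0:ℝ) 1 ×ˢ Set.Icc (0:ℝ) 1 := by
      simp only [Set.mem_prod, Set.mem_Icc]
      refine ⟨⟨by norm_num, by norm_num⟩, ⟨by linarith, by linarith⟩⟩
    have hpair : Tendsto (fun n => (A n, B n)) atTop
        (nhdsWithin ((1:ℝ), 1 - ε) (Set.Icc (0:ℝ) 1 ×ˢ Set.Icc (0:ℝ) 1)) :=
      tendsto_nhdsWithin_iff.mpr ⟨hA.prodMk_nhds hB, Eventually.of_forall hABmem⟩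
    have h11 := ((hTcont ((1:ℝ), 1 - ε) hmem1).tendsto).comp hpair
    have h12 : star 1 (1 - ε) = 1 - ε := by
      rw [hTcomm]; exact hTid _ ⟨by linarith, by linarith⟩
    rw [h12] at h11
    exact h11
  -- liminf bound for the shifted-back pair
  set p' : ℕ → ℕ := fun n => p n - 1 with hp'def
  set q' : ℕ → ℕ := fun n => q n - 1 with hq'def
  have hp' : StrictMono p' := fun a b hab => by
    have := hpmono hab; have := hp1 a; simp only [hp'def]; omega
  have hq' : StrictMono q' := fun a b hab => by
    have := hqmono hab; have := hq1 a; simp only [hq'def]; omega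
  have hlow : 1 - ε ≤ liminf (fun n => M (x (p' n)) (x (q' n)) t0) atTop := by
    refine le_of_forall_lt fun c hc => ?_
    set c' : ℝ := (c + (1 - ε)) / 2 with hc'def
    have hcc' : c < c' := by simp only [hc'def]; linarith
    have hc'lt : c' < 1 - ε := by simp only [hc'def]; linarith
    have hev : ∀ᶠ n in atTop, c' ≤ M (x (p' n)) (x (q' n)) t0 := by
      filter_upwards [hstar.eventually (eventually_gt_nhds hc'lt)] with n hn
      have h13 : star (A n) (B n) ≤ star (A n) (C n) :=
        hTmono _ _ _ _ le_rfl (min_le_left _ _)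
      have h14 := htri n
      exact le_trans (le_of_lt hn) (le_trans h13 h14)
    have hcb : IsCoboundedUnder (· ≥ ·) atTop (fun n => M (x (p' n)) (x (q' n)) t0) :=
      IsBoundedUnder.isCoboundedUnder_ge
        (isBoundedUnder_of ⟨1, fun n => (hM01 _ _ _ ht0).2⟩)
    exact lt_of_lt_of_le hcc' (le_liminf_of_le hcb hev)
  -- apply the gauge hypotheses and conclude
  have hgauge : liminf (fun n => 𝔐 (x (p' n)) (x (q' n)) t0) atTop ≥ 1 - ε :=
    le_trans hlow (hliminf p' q' hp' hq' t0 ht0)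
  obtain ⟨N, hN⟩ := hsub t0 ht0 ε ⟨hε0, hε1⟩ p' q' hp' hq' hgauge
  have h15 := hN N le_rfl
  have e1 : p' N + 1 = p N := by have := hp1 N; simp only [hp'def]; omega
  have e2 : q' N + 1 = q N := by have := hq1 N; simp only [hq'def]; omega
  rw [e1, e2] at h15
  have h16 := hbadpair N
  linarith
end

section
/- If T is a fuzzy Ćirić–Matkowski contractive mapping on a fuzzy metric space (X,M,*), then T is asymptotically regular at every point x∈X, i.e., M(Tⁿx,Tⁿ⁺¹x,t)→1 as n→∞ for every t>0. -/
open Filter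

/-- Fuzzy Ćirić–Matkowski contractive mapping. -/
def FuzzyCM {X : Type*} (M : X → X → ℝ → ℝ) (T : X → X) : Prop :=
  (∀ x y : X, x ≠ y → ∀ t : ℝ, 0 < t → M (T x) (T y) t > M x y t) ∧
  ∀ t : ℝ, 0 < t → ∀ r ∈ Set.Ioo (0:ℝ) 1, ∃ ρ ∈ Set.Ioo r 1,
    ∀ x y : X, 1 - r > M x y t → M x y t > 1 - ρ → M (T x) (T y) t ≥ 1 - r

theorem fuzzyCM_asymptotically_regular {X : Type*}
    (M : X → X → ℝ → ℝ) (star : ℝ → ℝ → ℝ)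
    (hFM : IsFuzzyMetric M star) (T : X → X) (hT : FuzzyCM M T) :
    ∀ x : X, ∀ t : ℝ, 0 < t →
      Tendsto (fun n : ℕ => M (T^[n] x) (T^[n+1] x) t) atTop (nhds 1) := by
  obtain ⟨hTN, hpos, heq, hsym, hcont, htri⟩ := hFM
  obtain ⟨h1, h2⟩ := hT
  intro x t ht
  set a : ℕ → ℝ := fun n => M (T^[n] x) (T^[n+1] x) t with ha
  by_cases hfix : ∃ n, T^[n] x = T^[n+1] x
  · obtain ⟨n0, hn0⟩ := hfix
    have key : ∀ n ≥ n0, T^[n] x = T^[n+1] x := by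
      intro n hn
      induction n with
      | zero => simpa [Nat.le_zero.mp hn] using hn0
      | succ k ih =>
        rcases Nat.lt_or_ge n0 (k+1) with h | h
        · have hk := ih (Nat.lt_succ_iff.mp h)
          rw [Function.iterate_succ_apply' T (k+1), ← hk]
          nth_rewrite 1 [hk]
          exact Function.iterate_succ_apply' T k x
        · have : n0 = k + 1 := le_antisymm hn h
          simpa [this] using hn0
    apply tendsto_atTop_of_eventually_const (i₀ := n0)
    intro n hn
    have := key n hn
    simp only [ha, ← this]
    exact ((heq _ _).mpr rfl) t ht
  · push_neg at hfix
    have hmono : StrictMono a := by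
      apply strictMono_nat_of_lt_succ
      intro n
      have := h1 (T^[n] x) (T^[n+1] x) (hfix n) t ht
      simpa [ha, Function.iterate_succ_apply'] using this
    have hbdd : BddAbove (Set.range a) := by
      refine ⟨1, ?_⟩
      rintro _ ⟨n, rfl⟩
      exact (hpos _ _ t ht).2
    set L : ℝ := ⨆ n, a n with hLdef
    have hL : Tendsto a atTop (nhds L) := tendsto_atTop_ciSup hmono.monotone hbdd
    have haltL : ∀ n, a n < L := fun n =>
      lt_of_lt_of_le (hmono (Nat.lt_succ_self n)) (le_ciSup hbdd (n+1))
    have hL1 : L ≤ 1 := ciSup_le fun n => (hpos _ _ t ht).2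
    have hL0 : 0 < L := lt_of_lt_of_le (hpos _ _ t ht).1 (le_ciSup hbdd 0)
    have hLeq : L = 1 := by
      by_contra hne
      have hLlt : L < 1 := lt_of_le_of_ne hL1 hne
      set r : ℝ := 1 - L with hr
      have hrI : r ∈ Set.Ioo (0:ℝ) 1 := ⟨by linarith, by linarith⟩
      obtain ⟨ρ, hρI, hcontr⟩ := h2 t ht r hrI
      have hρlt : 1 - ρ < L := by
        have := hρI.1; simp only [hr] at this ⊢; linarith
      obtain ⟨N, hN⟩ := (hL.eventually (eventually_gt_nhds hρlt)).exists
      have h1r : 1 - r > a N := by simp only [hr]; linarith [haltL N]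
      have := hcontr (T^[N] x) (T^[N+1] x) h1r hN
      have hstep : a (N+1) ≥ 1 - r := by
        simpa [ha, Function.iterate_succ_apply'] using this
      have : a (N+1) < L := haltL (N+1)
      simp only [hr] at hstep; linarith
    rw [← hLeq]
    exact hL
end

section
/- Let (X,M,*) be a complete fuzzy metric space, T a continuous self-map, α,β≥0, and 𝔐(x,y,t)=M(x,y,t)*M(x,Tx,t)^α*M(y,Ty,t)^β. Suppose (i) M(Tx,Ty,t)>𝔐(x,y,t) for x≠y, t>0, and (ii) for every t>0, r∈(0,1) there exist ρ∈(r,1) and N∈ℕ such that 𝔐(T^N x,T^N y,t)>1−ρ implies M(T^{N+1}x,T^{N+1}y,t)≥1−r for all x,y. If T is uniformly asymptotically regular at some x₀, then T has a unique fixed point. -/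
open Filter

section Aux
variable {X : Type*} {M : X → X → ℝ → ℝ} {star : ℝ → ℝ → ℝ}

lemma fm_mem (hFM : IsFuzzyMetric M star) (x y : X) {t : ℝ} (ht : 0 < t) :
    M x y t ∈ Set.Icc (0:ℝ) 1 :=
  ⟨(hFM.2.1 x y t ht).1.le, (hFM.2.1 x y t ht).2⟩

lemma fm_self (hFM : IsFuzzyMetric M star) (x : X) {t : ℝ} (ht : 0 < t) : M x x t = 1 :=
  (hFM.2.2.1 x x).2 rfl t ht

lemma tn_one (htn : IsTNorm star) {a : ℝ} (ha : a ∈ Set.Icc (0:ℝ) 1) : star a 1 = a :=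
  htn.2.2.2.1 a ha

lemma fm_mono (hFM : IsFuzzyMetric M star) (x y : X) {s t : ℝ} (hs : 0 < s) (hst : s ≤ t) :
    M x y s ≤ M x y t := by
  rcases eq_or_lt_of_le hst with rfl | h
  · exact le_rfl
  · have htri := hFM.2.2.2.2.2 x y y s (t - s) hs (by linarith)
    have he : s + (t - s) = t := by ring
    rw [he, fm_self hFM y (by linarith : (0:ℝ) < t - s),
      tn_one hFM.1 (fm_mem hFM x y hs)] at htri
    exact htri

lemma tn_near (htn : IsTNorm star) {p q : ℝ} (hp : p ∈ Set.Icc (0:ℝ) 1) (hq : q < p) :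
    ∃ δ > 0, ∀ b ∈ Set.Icc (0:ℝ) 1, 1 - δ < b → q < star p b := by
  have hc : ContinuousWithinAt (fun pr : ℝ × ℝ => star pr.1 pr.2)
      (Set.Icc 0 1 ×ˢ Set.Icc 0 1) (p, 1) :=
    htn.2.2.2.2.2 (p, 1) ⟨hp, by norm_num⟩
  have hev : ∀ᶠ pr in nhdsWithin (p, 1) (Set.Icc 0 1 ×ˢ Set.Icc 0 1),
      q < star pr.1 pr.2 := by
    apply hc.eventually
    have h : (fun pr : ℝ × ℝ => star pr.1 pr.2) (p, 1) = p := tn_one htn hp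
    rw [h]
    exact eventually_gt_nhds hq
  rw [eventually_iff, Metric.mem_nhdsWithin_iff] at hev
  obtain ⟨ε, hε, hsub⟩ := hev
  refine ⟨ε, hε, fun b hb hbε => ?_⟩
  have hmem : (p, b) ∈ Metric.ball ((p:ℝ), (1:ℝ)) ε ∩ (Set.Icc 0 1 ×ˢ Set.Icc 0 1) := by
    refine ⟨?_, hp, hb⟩
    rw [Metric.mem_ball, Prod.dist_eq]
    have h1 : dist p p = 0 := dist_self p
    have h2 : dist b 1 < ε := by
      rw [Real.dist_eq, abs_lt]
      constructor <;> [linarith; linarith [hb.2]]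
    simp only [h1]
    exact max_lt hε h2
  exact hsub hmem

lemma tn_near11 (htn : IsTNorm star) {q : ℝ} (hq : q < 1) :
    ∃ δ > 0, ∀ a ∈ Set.Icc (0:ℝ) 1, ∀ b ∈ Set.Icc (0:ℝ) 1,
      1 - δ < a → 1 - δ < b → q < star a b := by
  have hc : ContinuousWithinAt (fun pr : ℝ × ℝ => star pr.1 pr.2)
      (Set.Icc 0 1 ×ˢ Set.Icc 0 1) (1, 1) :=
    htn.2.2.2.2.2 (1, 1) ⟨by norm_num, by norm_num⟩
  have hev : ∀ᶠ pr in nhdsWithin (1, 1) (Set.Icc 0 1 ×ˢ Set.Icc 0 1),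
      q < star pr.1 pr.2 := by
    apply hc.eventually
    have h : (fun pr : ℝ × ℝ => star pr.1 pr.2) ((1:ℝ), (1:ℝ)) = 1 := tn_one htn (by norm_num)
    rw [h]
    exact eventually_gt_nhds hq
  rw [eventually_iff, Metric.mem_nhdsWithin_iff] at hev
  obtain ⟨ε, hε, hsub⟩ := hev
  refine ⟨ε, hε, fun a ha b hb haε hbε => ?_⟩
  have hmem : (a, b) ∈ Metric.ball ((1:ℝ), (1:ℝ)) ε ∩ (Set.Icc 0 1 ×ˢ Set.Icc 0 1) := by
    refine ⟨?_, ha, hb⟩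
    rw [Metric.mem_ball, Prod.dist_eq]
    have h1 : dist a 1 < ε := by
      rw [Real.dist_eq, abs_lt]; constructor <;> [linarith; linarith [ha.2]]
    have h2 : dist b 1 < ε := by
      rw [Real.dist_eq, abs_lt]; constructor <;> [linarith; linarith [hb.2]]
    exact max_lt h1 h2
  exact hsub hmem

lemma fm_ge_of_gt (hFM : IsFuzzyMetric M star) (x y : X) {t c : ℝ} (ht : 0 < t)
    (h : ∀ s, t < s → c ≤ M x y s) : c ≤ M x y t := by
  have hc : ContinuousWithinAt (M x y) (Set.Ioi t) t :=
    (hFM.2.2.2.2.1 x y t (Set.mem_Ioi.2 ht)).mono (Set.Ioi_subset_Ioi ht.le)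
  exact ge_of_tendsto hc (eventually_nhdsWithin_of_forall (fun s hs => h s hs))

lemma rpow_near {α δ : ℝ} (hδ : 0 < δ) :
    ∃ δ' > 0, ∀ b : ℝ, 0 < b → b ≤ 1 → 1 - δ' < b → 1 - δ < b ^ α := by
  have hc : ContinuousAt (fun x : ℝ => x ^ α) 1 :=
    Real.continuousAt_rpow_const 1 α (Or.inl one_ne_zero)
  rw [Metric.continuousAt_iff] at hc
  obtain ⟨δ', hδ', h⟩ := hc δ hδ
  refine ⟨δ', hδ', fun b hb0 hb1 hbδ => ?_⟩
  have hd : dist b 1 < δ' := by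
    rw [Real.dist_eq, abs_lt]; constructor <;> linarith
  have := h hd
  rw [Real.dist_eq, Real.one_rpow, abs_lt] at this
  linarith [this.1]

end Aux

theorem generalized_contraction_fixed_point {X : Type*}
    (M : X → X → ℝ → ℝ) (star : ℝ → ℝ → ℝ)
    (hFM : IsFuzzyMetric M star) (hcomp : MComplete M)
    (T : X → X)
    (hTcont : ∀ (x : ℕ → X) (z : X), FuzzyTendsto M x z →
      FuzzyTendsto M (fun n => T (x n)) (T z))
    (α β : ℝ) (hα : 0 ≤ α) (hβ : 0 ≤ β)
    (𝔐 : X → X → ℝ → ℝ)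
    (h𝔐 : ∀ x y : X, ∀ t : ℝ,
      𝔐 x y t = star (star (M x y t) ((M x (T x) t) ^ α)) ((M y (T y) t) ^ β))
    (hi : ∀ x y : X, x ≠ y → ∀ t : ℝ, 0 < t → M (T x) (T y) t > 𝔐 x y t)
    (hii : ∀ t : ℝ, 0 < t → ∀ r ∈ Set.Ioo (0:ℝ) 1,
      ∃ ρ ∈ Set.Ioo r 1, ∃ N : ℕ, ∀ x y : X,
        𝔐 (T^[N] x) (T^[N] y) t > 1 - ρ → M (T^[N+1] x) (T^[N+1] y) t ≥ 1 - r)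
    (x₀ : X) (hreg : UnifAsympRegular M (fun n : ℕ => T^[n] x₀)) :
    ∃! z : X, T z = z := by
  obtain ⟨htn, hpos, hone, hsymm, hMcont, htri⟩ := hFM
  have hFM : IsFuzzyMetric M star := ⟨htn, hpos, hone, hsymm, hMcont, htri⟩
  have hstarmono := htn.2.2.2.2.1
  have hstarcomm := htn.2.1
  set xx : ℕ → X := fun n : ℕ => T^[n] x₀ with hxx
  have hTx : ∀ n : ℕ, T (xx n) = xx (n + 1) := fun n =>
    (Function.iterate_succ_apply' T n x₀).symm
  -- uniform-in-time asymptotic regularity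
  have hARstar : ∀ ε : ℝ, 0 < ε → ∃ N : ℕ, ∀ n, N ≤ n → ∀ s : ℝ, 0 < s →
      1 - ε < M (xx n) (xx (n + 1)) s := by
    intro ε hε
    have hanti : StrictAnti (fun i : ℕ => 1 / ((i : ℝ) + 1)) := by
      intro i j hij
      apply one_div_lt_one_div_of_lt
      · positivity
      · exact_mod_cast Nat.add_lt_add_right hij 1
    obtain ⟨N, hN⟩ := hreg (fun i : ℕ => 1 / ((i : ℝ) + 1)) (fun i => by positivity)
      hanti tendsto_one_div_add_atTop_nhds_zero_nat ε hε
    refine ⟨N, fun n hn s hs => ?_⟩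
    obtain ⟨i, hi⟩ := exists_nat_one_div_lt hs
    have h1 := hN n hn i
    have h2 : M (xx n) (xx (n + 1)) (1 / ((i : ℝ) + 1)) ≤ M (xx n) (xx (n + 1)) s :=
      fm_mono hFM _ _ (by positivity) hi.le
    linarith
  -- the Picard sequence is Cauchy
  have hcauchy : MCauchy M xx := by
    rintro r ⟨hr0, hr1⟩ t ht
    set r' : ℝ := r / 2 with hr'def
    have hr'0 : 0 < r' := by positivity
    have hr'r : r' < r := by rw [hr'def]; linarith
    have hr'1 : r' < 1 := by linarith
    set t₀ : ℝ := t / 2 with ht₀def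
    have ht₀ : 0 < t₀ := by positivity
    have ht₀t : t₀ < t := by rw [ht₀def]; linarith
    obtain ⟨ρ, ⟨hρ1, hρ2⟩, N₀, himp⟩ := hii t₀ ht₀ r' ⟨hr'0, hr'1⟩
    set ρ₁ : ℝ := (r' + ρ) / 2 with hρ₁def
    set ρ₂ : ℝ := (ρ₁ + ρ) / 2 with hρ₂def
    have hρ₁a : r' < ρ₁ := by rw [hρ₁def]; linarith
    have hρ₁b : ρ₁ < ρ₂ := by rw [hρ₂def]; linarith [hρ₁a]
    have hρ₂c : ρ₂ < ρ := by rw [hρ₂def]; linarith [hρ₁b]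
    have hρ₁0 : 0 < ρ₁ := by linarith
    have hρ₁1 : ρ₁ < 1 := by linarith
    have hρ₂1 : ρ₂ < 1 := by linarith
    obtain ⟨δ₁, hδ₁, hA1⟩ := tn_near htn (p := 1 - ρ₁)
      ⟨by linarith, by linarith⟩ (q := 1 - ρ₂) (by linarith)
    obtain ⟨δ₂, hδ₂, hA2⟩ := tn_near htn (p := 1 - ρ₂)
      ⟨by linarith, by linarith⟩ (q := 1 - ρ) (by linarith)
    obtain ⟨δ₃, hδ₃, hB⟩ := tn_near htn (p := 1 - r')
      ⟨by linarith, by linarith⟩ (q := 1 - ρ₁) (by linarith)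
    obtain ⟨δ₁', hδ₁', hpow₁⟩ := rpow_near (α := α) hδ₁
    obtain ⟨δ₂', hδ₂', hpow₂⟩ := rpow_near (α := β) hδ₂
    set ε₀ : ℝ := min δ₃ (min δ₁' δ₂') with hε₀def
    have hε₀ : 0 < ε₀ := lt_min hδ₃ (lt_min hδ₁' hδ₂')
    have hε₀3 : ε₀ ≤ δ₃ := min_le_left _ _
    have hε₀1 : ε₀ ≤ δ₁' := le_trans (min_le_right _ _) (min_le_left _ _)
    have hε₀2 : ε₀ ≤ δ₂' := le_trans (min_le_right _ _) (min_le_right _ _)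
    obtain ⟨N₁, hN₁⟩ := hARstar ε₀ hε₀
    set K : ℕ := max N₀ N₁ with hKdef
    have hKN₀ : N₀ ≤ K := le_max_left _ _
    have hKN₁ : N₁ ≤ K := le_max_right _ _
    -- key step: from the invariant at gap k, get the contraction conclusion
    have key : ∀ k : ℕ,
        (∀ n, K ≤ n → ∀ s, t₀ < s → 1 - ρ₁ < M (xx n) (xx (n + k)) s) →
        ∀ n, K ≤ n → 1 - r' ≤ M (xx (n + 1)) (xx (n + k + 1)) t₀ := by
      intro k hP n hn
      have hb : 1 - ρ₁ ≤ M (xx n) (xx (n + k)) t₀ :=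
        fm_ge_of_gt hFM _ _ ht₀ (fun s hs => (hP n hn s hs).le)
      have hb1 : 1 - ε₀ < M (xx n) (xx (n + 1)) t₀ :=
        hN₁ n (le_trans hKN₁ hn) t₀ ht₀
      have hb2 : 1 - ε₀ < M (xx (n + k)) (xx (n + k + 1)) t₀ :=
        hN₁ (n + k) (le_trans (le_trans hKN₁ hn) (Nat.le_add_right n k)) t₀ ht₀
      have hm1 := hpos (xx n) (xx (n + 1)) t₀ ht₀
      have hm2 := hpos (xx (n + k)) (xx (n + k + 1)) t₀ ht₀
      have hp1 : 1 - δ₁ < (M (xx n) (xx (n + 1)) t₀) ^ α :=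
        hpow₁ _ hm1.1 hm1.2 (by linarith)
      have hp2 : 1 - δ₂ < (M (xx (n + k)) (xx (n + k + 1)) t₀) ^ β :=
        hpow₂ _ hm2.1 hm2.2 (by linarith)
      have hp1m : (M (xx n) (xx (n + 1)) t₀) ^ α ∈ Set.Icc (0:ℝ) 1 :=
        ⟨Real.rpow_nonneg hm1.1.le α, Real.rpow_le_one hm1.1.le hm1.2 hα⟩
      have hp2m : (M (xx (n + k)) (xx (n + k + 1)) t₀) ^ β ∈ Set.Icc (0:ℝ) 1 :=
        ⟨Real.rpow_nonneg hm2.1.le β, Real.rpow_le_one hm2.1.le hm2.2 hβ⟩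
      have hMfrak : 1 - ρ < 𝔐 (xx n) (xx (n + k)) t₀ := by
        rw [h𝔐, hTx n, hTx (n + k)]
        have hc1 : 1 - ρ₂ < star (1 - ρ₁) ((M (xx n) (xx (n + 1)) t₀) ^ α) :=
          hA1 _ hp1m hp1
        have hc2 : star (1 - ρ₁) ((M (xx n) (xx (n + 1)) t₀) ^ α) ≤
            star (M (xx n) (xx (n + k)) t₀) ((M (xx n) (xx (n + 1)) t₀) ^ α) :=
          hstarmono _ _ _ _ hb le_rfl
        have hc3 : 1 - ρ < star (1 - ρ₂) ((M (xx (n + k)) (xx (n + k + 1)) t₀) ^ β) :=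
          hA2 _ hp2m hp2
        have hc4 : star (1 - ρ₂) ((M (xx (n + k)) (xx (n + k + 1)) t₀) ^ β) ≤
            star (star (M (xx n) (xx (n + k)) t₀) ((M (xx n) (xx (n + 1)) t₀) ^ α))
              ((M (xx (n + k)) (xx (n + k + 1)) t₀) ^ β) :=
          hstarmono _ _ _ _ (by linarith) le_rfl
        linarith
      have hitn : T^[N₀] (T^[n - N₀] x₀) = xx n := by
        rw [← Function.iterate_add_apply]
        have : N₀ + (n - N₀) = n := by omega
        rw [this]
      have hitnk : T^[N₀] (T^[n + k - N₀] x₀) = xx (n + k) := by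
        rw [← Function.iterate_add_apply]
        have : N₀ + (n + k - N₀) = n + k := by omega
        rw [this]
      have hitn' : T^[N₀ + 1] (T^[n - N₀] x₀) = xx (n + 1) := by
        rw [← Function.iterate_add_apply]
        have : N₀ + 1 + (n - N₀) = n + 1 := by omega
        rw [this]
      have hitnk' : T^[N₀ + 1] (T^[n + k - N₀] x₀) = xx (n + k + 1) := by
        rw [← Function.iterate_add_apply]
        have : N₀ + 1 + (n + k - N₀) = n + k + 1 := by omega
        rw [this]
      have hc := himp (T^[n - N₀] x₀) (T^[n + k - N₀] x₀)
      rw [hitn, hitnk, hitn', hitnk'] at hc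
      exact hc hMfrak
    -- the invariant, by induction on the gap
    have P : ∀ k : ℕ, ∀ n, K ≤ n → ∀ s, t₀ < s → 1 - ρ₁ < M (xx n) (xx (n + k)) s := by
      intro k
      induction k with
      | zero =>
        intro n hn s hs
        rw [Nat.add_zero, fm_self hFM _ (lt_trans ht₀ hs)]
        linarith
      | succ k ih =>
        intro n hn s hs
        have hk := key k ih n hn
        have htri' := htri (xx n) (xx (n + 1)) (xx (n + (k + 1))) (s - t₀) t₀
          (by linarith) ht₀
        have he : s - t₀ + t₀ = s := by ring
        rw [he] at htri'
        have hAR : 1 - ε₀ < M (xx n) (xx (n + 1)) (s - t₀) :=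
          hN₁ n (le_trans hKN₁ hn) _ (by linarith)
        have hARm := fm_mem hFM (xx n) (xx (n + 1)) (show (0:ℝ) < s - t₀ by linarith)
        have hst1 : 1 - ρ₁ < star (1 - r') (M (xx n) (xx (n + 1)) (s - t₀)) :=
          hB _ hARm (by linarith)
        have hst2 : star (1 - r') (M (xx n) (xx (n + 1)) (s - t₀)) ≤
            star (M (xx (n + 1)) (xx (n + k + 1)) t₀) (M (xx n) (xx (n + 1)) (s - t₀)) :=
          hstarmono _ _ _ _ hk le_rfl
        have hst3 : star (M (xx (n + 1)) (xx (n + k + 1)) t₀) (M (xx n) (xx (n + 1)) (s - t₀))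
            = star (M (xx n) (xx (n + 1)) (s - t₀)) (M (xx (n + 1)) (xx (n + k + 1)) t₀) :=
          hstarcomm _ _
        have hidx : n + (k + 1) = n + k + 1 := by omega
        rw [hidx]
        have := htri'
        rw [hidx] at this
        linarith
    -- conclude Cauchy
    refine ⟨K + 1, fun m hm n hn => ?_⟩
    rcases lt_trichotomy n m with h | rfl | h
    · have hkey := key (m - n) (P (m - n)) (n - 1) (by omega)
      have he1 : n - 1 + 1 = n := by omega
      have he2 : n - 1 + (m - n) + 1 = m := by omega
      rw [he1, he2] at hkey
      have hmt : M (xx n) (xx m) t₀ ≤ M (xx n) (xx m) t := fm_mono hFM _ _ ht₀ ht₀t.le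
      linarith
    · rw [fm_self hFM _ ht]; linarith
    · have hkey := key (n - m) (P (n - m)) (m - 1) (by omega)
      have he1 : m - 1 + 1 = m := by omega
      have he2 : m - 1 + (n - m) + 1 = n := by omega
      rw [he1, he2] at hkey
      have hmt : M (xx m) (xx n) t₀ ≤ M (xx m) (xx n) t := fm_mono hFM _ _ ht₀ ht₀t.le
      rw [hsymm]
      linarith
  -- limit of the Picard sequence
  obtain ⟨z, hz⟩ := hcomp xx hcauchy
  have hz' : FuzzyTendsto M (fun n => xx (n + 1)) z := fun t ht =>
    (hz t ht).comp (tendsto_add_atTop_nat 1)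
  have hTz : FuzzyTendsto M (fun n => xx (n + 1)) (T z) := by
    have h := hTcont xx z hz
    have heq : (fun n : ℕ => xx (n + 1)) = fun n : ℕ => T (xx n) :=
      funext fun n => (hTx n).symm
    rw [heq]
    exact h
  -- uniqueness of fuzzy limits
  have limuniq : ∀ (y : ℕ → X) (a b : X),
      FuzzyTendsto M y a → FuzzyTendsto M y b → a = b := by
    intro y a b ha hb
    rw [← hone a b]
    intro t ht
    have hle : M a b t ≤ 1 := (hpos a b t ht).2
    have hgt : ∀ ε : ℝ, 0 < ε → 1 - ε < M a b t := by
      intro ε hε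
      rcases le_or_gt 1 ε with h | h
      · have := (hpos a b t ht).1; linarith
      · obtain ⟨δ, hδ, hnear⟩ := tn_near11 htn (q := 1 - ε) (by linarith)
        have ht2 : (0:ℝ) < t / 2 := by positivity
        have hae := (ha (t / 2) ht2).eventually (eventually_gt_nhds
          (show 1 - δ < 1 by linarith))
        have hbe := (hb (t / 2) ht2).eventually (eventually_gt_nhds
          (show 1 - δ < 1 by linarith))
        obtain ⟨n, hna, hnb⟩ := (hae.and hbe).exists
        have htri' := htri a (y n) b (t / 2) (t / 2) ht2 ht2
        have he : t / 2 + t / 2 = t := by ring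
        rw [he] at htri'
        have hsab : M a (y n) (t / 2) = M (y n) a (t / 2) := hsymm _ _ _
        have hm1 := fm_mem hFM a (y n) ht2
        have hm2 := fm_mem hFM (y n) b ht2
        have := hnear _ hm1 _ hm2 (by rw [hsab]; linarith) hnb
        linarith
    by_contra hne
    have h1 : M a b t < 1 := lt_of_le_of_ne hle hne
    have := hgt (1 - M a b t) (by linarith)
    linarith
  have hfix : T z = z := limuniq (fun n => xx (n + 1)) (T z) z hTz hz'
  refine ⟨z, hfix, fun y hy => ?_⟩
  by_contra hne
  have h := hi y z hne 1 one_pos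
  rw [h𝔐, hy, hfix] at h
  rw [fm_self hFM y one_pos, fm_self hFM z one_pos, Real.one_rpow, Real.one_rpow,
    tn_one htn (fm_mem hFM y z one_pos),
    tn_one htn (fm_mem hFM y z one_pos)] at h
  exact lt_irrefl _ h
end

section
/- Let X={0,1,2,5} with T0=0, T1=5, T2=0, T5=2, * the product t-norm, and M(x,y,t)=exp(−|x−y|/t). Define 𝔐(x,y,t)=M(x,y,t)·M(x,Tx,t)²·M(y,Ty,t)². Then M(Tx,Ty,t) ≥ 𝔐(x,y,t)^{5/7} for all x,y∈X and t>0, while M(T0,T1,t) < M(0,1,t) for all t>0. -/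
lemma key_exp (a b c d t : ℝ) (ht : 0 < t) (h : 7 * d ≤ 5 * (a + 2*b + 2*c)) :
    Real.exp (-d / t) ≥
      (Real.exp (-a / t) * Real.exp (-b / t) ^ 2 * Real.exp (-c / t) ^ 2) ^ ((5 : ℝ) / 7) := by
  have h1 : Real.exp (-a / t) * Real.exp (-b / t) ^ 2 * Real.exp (-c / t) ^ 2
      = Real.exp (-(a + 2*b + 2*c) / t) := by
    simp only [sq, ← Real.exp_add]
    congr 1
    ring
  rw [h1, ← Real.exp_mul, ge_iff_le, Real.exp_le_exp]
  simp only [div_eq_mul_inv]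
  nlinarith [inv_pos.mpr ht]

theorem example_final (T : ℝ → ℝ)
    (hT0 : T 0 = 0) (hT1 : T 1 = 5) (hT2 : T 2 = 0) (hT5 : T 5 = 2)
    (M : ℝ → ℝ → ℝ → ℝ) (hM : ∀ x y t : ℝ, M x y t = Real.exp (-|x - y| / t))
    (𝔐 : ℝ → ℝ → ℝ → ℝ)
    (h𝔐 : ∀ x y t : ℝ, 𝔐 x y t = M x y t * (M x (T x) t) ^ 2 * (M y (T y) t) ^ 2) :
    (∀ x ∈ ({0, 1, 2, 5} : Set ℝ), ∀ y ∈ ({0, 1, 2, 5} : Set ℝ), ∀ t : ℝ, 0 < t →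
      M (T x) (T y) t ≥ (𝔐 x y t) ^ ((5 : ℝ) / 7)) ∧
    (∀ t : ℝ, 0 < t → M (T 0) (T 1) t < M 0 1 t) := by
  constructor
  · intro x hx y hy t ht
    simp only [Set.mem_insert_iff, Set.mem_singleton_iff] at hx hy
    rcases hx with rfl | rfl | rfl | rfl <;> rcases hy with rfl | rfl | rfl | rfl <;>
      simp only [h𝔐, hM, hT0, hT1, hT2, hT5,
      show |(0:ℝ)-(0:ℝ)| = 0 from by norm_num,
      show |(0:ℝ)-(1:ℝ)| = 1 from by norm_num,
      show |(0:ℝ)-(2:ℝ)| = 2 from by norm_num,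
      show |(0:ℝ)-(5:ℝ)| = 5 from by norm_num,
      show |(1:ℝ)-(0:ℝ)| = 1 from by norm_num,
      show |(1:ℝ)-(1:ℝ)| = 0 from by norm_num,
      show |(1:ℝ)-(2:ℝ)| = 1 from by norm_num,
      show |(1:ℝ)-(5:ℝ)| = 4 from by norm_num,
      show |(2:ℝ)-(0:ℝ)| = 2 from by norm_num,
      show |(2:ℝ)-(1:ℝ)| = 1 from by norm_num,
      show |(2:ℝ)-(2:ℝ)| = 0 from by norm_num,
      show |(2:ℝ)-(5:ℝ)| = 3 from by norm_num,
      show |(5:ℝ)-(0:ℝ)| = 5 from by norm_num,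
      show |(5:ℝ)-(1:ℝ)| = 4 from by norm_num,
      show |(5:ℝ)-(2:ℝ)| = 3 from by norm_num,
      show |(5:ℝ)-(5:ℝ)| = 0 from by norm_num] <;>
      exact key_exp _ _ _ _ _ ht (by norm_num)
  · intro t ht
    rw [hT0, hT1, hM, hM, Real.exp_lt_exp,
      show |(0:ℝ)-(5:ℝ)| = 5 from by norm_num,
      show |(0:ℝ)-(1:ℝ)| = 1 from by norm_num]
    simp only [div_eq_mul_inv]
    nlinarith [inv_pos.mpr ht]
end

section
/- Let X=[0,∞) with the metric d(x,y)=max{x,y} for x≠y and d(x,x)=0, and let M_d(x,y,t)=t/(t+d(x,y)) with the product t-norm. Let φ:[0,∞)→[0,∞) be given by φ(0)=0, φ(s)=1/(n+1) for 1/(n+1)<s≤1/n, and φ(s)=1 for s>1. Then there is no ψ∈Ψ (continuous, nondecreasing, ψ(τ)>τ on (0,1)) such that M_d(φ(x),φ(y),t) ≥ ψ(M_d(x,y,t)) for all x,y∈X and t>0. -/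
theorem example_not_Psi_contractive
    (d : ℝ → ℝ → ℝ) (hd : ∀ x y : ℝ, d x y = if x = y then 0 else max x y)
    (Md : ℝ → ℝ → ℝ → ℝ) (hMd : ∀ x y t : ℝ, Md x y t = t / (t + d x y))
    (φ : ℝ → ℝ) (hφ0 : φ 0 = 0)
    (hφn : ∀ n : ℕ, 1 ≤ n → ∀ s : ℝ, 1 / ((n : ℝ) + 1) < s → s ≤ 1 / (n : ℝ) →
      φ s = 1 / ((n : ℝ) + 1))
    (hφ1 : ∀ s : ℝ, 1 < s → φ s = 1) :
    ¬ ∃ ψ : ℝ → ℝ, PsiClass ψ ∧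
      ∀ x ∈ Set.Ici (0:ℝ), ∀ y ∈ Set.Ici (0:ℝ), ∀ t : ℝ, 0 < t →
        Md (φ x) (φ y) t ≥ ψ (Md x y t) := by
  rintro ⟨ψ, ⟨hmap, hcont, hmono, hgt⟩, H⟩
  have hc : (1:ℝ)/2 < ψ (1/2) := hgt (1/2) ⟨by norm_num, by norm_num⟩
  obtain ⟨m, hm⟩ := exists_nat_gt (1/(2*ψ (1/2)-1))
  set n : ℕ := m + 1 with hn
  have hnR : (0:ℝ) < (n:ℝ) := by positivity
  have hn1R : (0:ℝ) < (n:ℝ) + 1 := by positivity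
  have key := H (1/(n:ℝ)) (Set.mem_Ici.mpr (by positivity)) 0 (Set.mem_Ici.mpr le_rfl)
    (1/(n:ℝ)) (by positivity)
  have hφa : φ (1/(n:ℝ)) = 1/((n:ℝ)+1) := by
    refine hφn n (Nat.le_add_left 1 m) _ ?_ le_rfl
    exact one_div_lt_one_div_of_lt hnR (by linarith)
  rw [hφa, hφ0, hMd, hMd, hd, hd] at key
  rw [if_neg (by positivity), if_neg (by positivity)] at key
  rw [max_eq_left (by positivity), max_eq_left (by positivity)] at key
  have h2 : (1/(n:ℝ)) / (1/(n:ℝ) + 1/(n:ℝ)) = 1/2 := by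
    field_simp; ring
  rw [h2] at key
  -- key : 1/n / (1/n + 1/(n+1)) ≥ ψ (1/2)
  have hlt : (1/(n:ℝ)) / (1/(n:ℝ) + 1/((n:ℝ)+1)) < ψ (1/2) := by
    have hψ0 : 0 < ψ (1/2) := (hmap (1/2) ⟨by norm_num, by norm_num⟩).1
    have hmn : 1/(2*ψ (1/2)-1) < (n:ℝ) := by
      have : (m:ℝ) < (n:ℝ) := by exact_mod_cast Nat.lt_succ_self m
      linarith
    have hden : (0:ℝ) < 2*ψ (1/2) - 1 := by linarith
    have h1 : 1 < (n:ℝ) * (2*ψ (1/2) - 1) := by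
      rw [div_lt_iff₀ hden] at hmn
      linarith
    have e : (1/(n:ℝ)) / (1/(n:ℝ) + 1/((n:ℝ)+1)) = ((n:ℝ)+1)/(2*(n:ℝ)+1) := by
      rw [div_eq_div_iff (by positivity) (by positivity)]
      field_simp; ring
    rw [e, div_lt_iff₀ (by positivity)]
    nlinarith
  exact absurd key (not_le.mpr hlt)
end
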